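/- arXiv:2112.03107 — 10 statements merged into one kernel-verified Lean document; each statement's English description precedes it below -/
import Mathlib

section
/- For any tree T with at least two vertices, there exists a neo-colonization of minimum total weight in which every part has size at least two. -/
open scoped Classical

namespace ED

variable {V : Type}

/-- `D` is a dominating set of `G`. -/
def IsDomSet (G : SimpleGraph V) (D : Set V) : Prop :=
  ∀ v, v ∉ D → ∃ u ∈ D, G.Adj u v

/-- The domination number. -/
noncomputable def domNum (G : SimpleGraph V) : ℕ :=
  sInf {n | ∃ D : Set V, IsDomSet G D ∧ D.ncard = n}

/-- The connected domination number. -/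
noncomputable def connDomNum (G : SimpleGraph V) : ℕ :=
  sInf {n | ∃ D : Set V, IsDomSet G D ∧ (G.induce D).Connected ∧ D.ncard = n}

/-- The weight of a part of a neo-colonization. -/
noncomputable def partWeight (G : SimpleGraph V) (S : Set V) : ℕ :=
  if G.IsClique S then 1 else 1 + connDomNum (G.induce S)

/-- `P` is a neo-colonization of `G`: a partition of the vertex set into parts
inducing connected subgraphs. -/
def IsNeoColonization (G : SimpleGraph V) (P : Finset (Set V)) : Prop :=
  (∀ S ∈ P, (G.induce S).Connected) ∧ (∀ v : V, ∃! S, S ∈ P ∧ v ∈ S)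

/-- The total weight of a neo-colonization. -/
noncomputable def neoWeight (G : SimpleGraph V) (P : Finset (Set V)) : ℕ :=
  ∑ S ∈ P, partWeight G S

/-- The clique-connected cover number: minimum weight of a neo-colonization. -/
noncomputable def thetaC (G : SimpleGraph V) : ℕ :=
  sInf {w | ∃ P : Finset (Set V), IsNeoColonization G P ∧ neoWeight G P = w}

/-- `k` guards can defend `G` in the all-guards-move eternal domination game:
there is a nonempty family of dominating configurations of size `k`, closed under
responding to attacks, where every guard may move to an adjacent vertex and the
attacked vertex becomes occupied. -/
def CanDefendAllMove (G : SimpleGraph V) (k : ℕ) : Prop :=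
  ∃ F : Set (Set V), F.Nonempty ∧ (∀ D ∈ F, IsDomSet G D ∧ D.ncard = k) ∧
    ∀ D ∈ F, ∀ r ∉ D, ∃ D' ∈ F, r ∈ D' ∧
      ∃ f : V → V, Set.BijOn f D D' ∧ ∀ v ∈ D, f v = v ∨ G.Adj v (f v)

/-- The m-eternal domination number. -/
noncomputable def mEternalDomNum (G : SimpleGraph V) : ℕ :=
  sInf {k | CanDefendAllMove G k}

/-- `k` guards can defend `G` in the one-guard-moves eternal domination game. -/
def CanDefendOneMove (G : SimpleGraph V) (k : ℕ) : Prop :=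
  ∃ F : Set (Set V), F.Nonempty ∧ (∀ D ∈ F, IsDomSet G D ∧ D.ncard = k) ∧
    ∀ D ∈ F, ∀ r ∉ D, ∃ v ∈ D, G.Adj v r ∧ insert r (D \ {v}) ∈ F

/-- The eternal domination number. -/
noncomputable def eternalDomNum (G : SimpleGraph V) : ℕ :=
  sInf {k | CanDefendOneMove G k}

/-- The independence number. -/
noncomputable def indepNum (G : SimpleGraph V) : ℕ :=
  sSup {n | ∃ S : Set V, S.Pairwise (fun u v => ¬ G.Adj u v) ∧ S.ncard = n}

/-- A leaf: a vertex of degree one. -/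
def IsLeaf (G : SimpleGraph V) (v : V) : Prop := (G.neighborSet v).ncard = 1

/-- A stem: a vertex of degree at least two adjacent to a leaf. -/
def IsStem (G : SimpleGraph V) (s : V) : Prop :=
  2 ≤ (G.neighborSet s).ncard ∧ ∃ v, G.Adj s v ∧ IsLeaf G v

/-- A loner: an internal vertex adjacent to no leaf. -/
def IsLoner (G : SimpleGraph V) (v : V) : Prop :=
  ¬ IsLeaf G v ∧ ∀ u, G.Adj v u → ¬ IsLeaf G u

/-- A weak stem: a stem adjacent to exactly one leaf. -/
def IsWeakStem (G : SimpleGraph V) (s : V) : Prop :=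
  IsStem G s ∧ {v | G.Adj s v ∧ IsLeaf G v}.ncard = 1

/-- An exposed stem: a stem with at most one internal (non-leaf) neighbor. -/
def IsExposedStem (G : SimpleGraph V) (s : V) : Prop :=
  IsStem G s ∧ {v | G.Adj s v ∧ ¬ IsLeaf G v}.ncard ≤ 1

/-- `G` is a star: some center is adjacent to all other vertices and
every edge is incident to the center. -/
def IsStarGraph (G : SimpleGraph V) : Prop :=
  ∃ c, (∀ v, v ≠ c → G.Adj c v) ∧ ∀ u v, G.Adj u v → u = c ∨ v = c

end ED

/-!
Merging a singleton part `{v}` into the part containing a neighbour `u` of `v` never increases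
the weight: a connected dominating set of the old part, enlarged by `u` if necessary, still
dominates the merged part, and has at most as many vertices as the old part's weight. In a
connected graph with at least two vertices every vertex has a neighbour, so singleton parts can be
merged away one at a time, starting from a neo-colonization of minimum weight.
-/

open ED SimpleGraph

namespace ED

variable {V : Type} {G : SimpleGraph V}

/-- `C` is a connected dominating set of the subgraph of `G` induced by `S`, seen inside `V`. -/
def IsConnDomSetOn (G : SimpleGraph V) (S C : Set V) : Prop :=
  C ⊆ S ∧ (∀ x ∈ S, x ∉ C → ∃ y ∈ C, G.Adj y x) ∧ (G.induce C).Connected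

noncomputable def induceInduceIso (G : SimpleGraph V) (S : Set V) (D : Set S) :
    (G.induce S).induce D ≃g G.induce (Subtype.val '' D) where
  toEquiv := Equiv.Set.image Subtype.val D Subtype.val_injective
  map_rel_iff' := Iff.rfl

theorem connDomNum_induce_le {S C : Set V} (hC : IsConnDomSetOn G S C) :
    connDomNum (G.induce S) ≤ C.ncard := by
  obtain ⟨hCS, hdom, hconn⟩ := hC
  have himage : Subtype.val '' {x : S | ↑x ∈ C} = C := by
    ext x
    exact ⟨by rintro ⟨y, hy, rfl⟩; exact hy, fun hx => ⟨⟨x, hCS hx⟩, hx, rfl⟩⟩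
  refine Nat.sInf_le ⟨{x : S | ↑x ∈ C}, ?_, ?_, ?_⟩
  · rintro ⟨x, hx⟩ hxC
    obtain ⟨y, hyC, hadj⟩ := hdom x hx hxC
    exact ⟨⟨y, hCS hyC⟩, hyC, hadj⟩
  · rw [(induceInduceIso G S _).connected_iff, himage]
    exact hconn
  · rw [← Set.ncard_image_of_injective _ Subtype.val_injective, himage]

theorem exists_isConnDomSetOn_ncard_eq {S : Set V} (hS : (G.induce S).Connected) :
    ∃ C, IsConnDomSetOn G S C ∧ C.ncard = connDomNum (G.induce S) := by
  have hne : {n | ∃ D : Set S, IsDomSet (G.induce S) D ∧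
      ((G.induce S).induce D).Connected ∧ D.ncard = n}.Nonempty :=
    ⟨_, Set.univ, fun v hv => absurd trivial hv,
      (induceUnivIso (G.induce S)).connected_iff.mpr hS, rfl⟩
  obtain ⟨D, hdom, hconn, hcard⟩ := Nat.sInf_mem hne
  refine ⟨Subtype.val '' D, ⟨?_, ?_, (induceInduceIso G S D).connected_iff.mp hconn⟩, ?_⟩
  · rintro x ⟨y, -, rfl⟩
    exact y.2
  · intro x hx hxD
    obtain ⟨u, huD, hadj⟩ := hdom ⟨x, hx⟩ fun h => hxD ⟨⟨x, hx⟩, h, rfl⟩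
    exact ⟨u, ⟨u, huD, rfl⟩, hadj⟩
  · rw [Set.ncard_image_of_injective _ Subtype.val_injective, hcard]
    rfl

theorem partWeight_le_one_add_connDomNum (S : Set V) :
    partWeight G S ≤ 1 + connDomNum (G.induce S) := by
  unfold partWeight
  split_ifs <;> omega

theorem exists_isConnDomSetOn_mem_ncard_le_partWeight {S : Set V}
    (hS : (G.induce S).Connected) {u : V} (hu : u ∈ S) :
    ∃ C, IsConnDomSetOn G S C ∧ u ∈ C ∧ C.ncard ≤ partWeight G S := by
  by_cases hclique : G.IsClique S
  · refine ⟨{u}, ⟨Set.singleton_subset_iff.mpr hu, ?_, by simp⟩, rfl,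
      by simp [partWeight, hclique]⟩
    intro x hx hxu
    exact ⟨u, rfl, hclique hu hx (Ne.symm hxu)⟩
  obtain ⟨C, ⟨hCS, hdom, hconn⟩, hcard⟩ := exists_isConnDomSetOn_ncard_eq hS
  have hconn' : (G.induce (insert u C)).Connected := by
    by_cases huC : u ∈ C
    · rwa [Set.insert_eq_of_mem huC]
    obtain ⟨y, hyC, hyu⟩ := hdom u hu huC
    rw [Set.insert_eq, Set.union_comm]
    exact connected_induce_union hconn.preconnected (induce_singleton_eq_top G u ▸
      connected_top.preconnected) hyC rfl hyu
  refine ⟨insert u C, ⟨Set.insert_subset hu hCS, ?_, hconn'⟩, Set.mem_insert u C, ?_⟩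
  · intro x hx hxC
    obtain ⟨y, hyC, hyx⟩ := hdom x hx fun h => hxC (Set.mem_insert_of_mem u h)
    exact ⟨y, Set.mem_insert_of_mem u hyC, hyx⟩
  · rw [partWeight, if_neg hclique, ← hcard, add_comm]
    exact Set.ncard_insert_le u C

theorem partWeight_insert_le {S : Set V} (hS : (G.induce S).Connected) {u v : V} (hu : u ∈ S)
    (huv : G.Adj u v) : partWeight G (insert v S) ≤ partWeight G S + 1 := by
  obtain ⟨C, ⟨hCS, hdom, hconn⟩, huC, hcard⟩ :=
    exists_isConnDomSetOn_mem_ncard_le_partWeight hS hu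
  have hC : IsConnDomSetOn G (insert v S) C := by
    refine ⟨hCS.trans (Set.subset_insert v S), ?_, hconn⟩
    rintro x (rfl | hx) hxC
    · exact ⟨u, huC, huv⟩
    · exact hdom x hx hxC
  have := connDomNum_induce_le hC
  have := partWeight_le_one_add_connDomNum (G := G) (insert v S)
  omega

theorem isNeoColonization_singleton_univ (hG : G.Connected) :
    IsNeoColonization G {Set.univ} := by
  constructor
  · rintro S hS
    rw [Finset.mem_singleton.mp hS]
    exact (induceUnivIso G).connected_iff.mpr hG
  · exact fun v => ⟨Set.univ, ⟨Finset.mem_singleton_self _, trivial⟩,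
      fun R hR => Finset.mem_singleton.mp hR.1⟩

theorem thetaC_le_neoWeight {P : Finset (Set V)} (hP : IsNeoColonization G P) :
    thetaC G ≤ neoWeight G P :=
  Nat.sInf_le ⟨P, hP, rfl⟩

theorem exists_neoWeight_eq_thetaC (hG : G.Connected) :
    ∃ P, IsNeoColonization G P ∧ neoWeight G P = thetaC G :=
  Nat.sInf_mem (s := {w | ∃ P, IsNeoColonization G P ∧ neoWeight G P = w})
    ⟨_, _, isNeoColonization_singleton_univ hG, rfl⟩

noncomputable def mergeParts (P : Finset (Set V)) (A B : Set V) : Finset (Set V) :=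
  insert (A ∪ B) ((P.erase A).erase B)

theorem card_mergeParts_lt {P : Finset (Set V)} {A B : Set V} (hA : A ∈ P) (hB : B ∈ P)
    (hAB : A ≠ B) : (mergeParts P A B).card < P.card := by
  have hBA : B ∈ P.erase A := Finset.mem_erase.mpr ⟨hAB.symm, hB⟩
  have := Finset.card_insert_le (A ∪ B) ((P.erase A).erase B)
  rw [Finset.card_erase_of_mem hBA, Finset.card_erase_of_mem hA] at this
  have : 2 ≤ P.card := Finset.one_lt_card.mpr ⟨A, hA, B, hB, hAB⟩
  unfold mergeParts
  omega

namespace IsNeoColonization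

variable {P : Finset (Set V)}

theorem eq_of_mem (hP : IsNeoColonization G P) {A B : Set V} (hA : A ∈ P) (hB : B ∈ P) {x : V}
    (hxA : x ∈ A) (hxB : x ∈ B) : A = B :=
  (hP.2 x).unique ⟨hA, hxA⟩ ⟨hB, hxB⟩

theorem union_notMem_erase_erase (hP : IsNeoColonization G P) {A B : Set V} (hA : A ∈ P)
    (hB : B ∈ P) (hAB : A ≠ B) {a : V} (ha : a ∈ A) : A ∪ B ∉ (P.erase A).erase B := by
  intro h
  have hAB' : A ∪ B ∈ P := Finset.mem_of_mem_erase (Finset.mem_of_mem_erase h)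
  obtain ⟨⟨b, hb⟩⟩ := (hP.1 B hB).nonempty
  have hA' : A ∪ B = A := hP.eq_of_mem hAB' hA (Set.mem_union_left B ha) ha
  exact hAB (hP.eq_of_mem hA hB (hA' ▸ Set.mem_union_right A hb) hb)

theorem mergeParts_of_adj (hP : IsNeoColonization G P) {A B : Set V} (hA : A ∈ P)
    (hB : B ∈ P) {a b : V} (ha : a ∈ A) (hb : b ∈ B) (hab : G.Adj a b) :
    IsNeoColonization G (mergeParts P A B) := by
  refine ⟨?_, fun x => ?_⟩
  · intro R hR
    rcases Finset.mem_insert.mp hR with rfl | hR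
    · exact connected_induce_union (hP.1 A hA).preconnected (hP.1 B hB).preconnected ha hb hab
    · exact hP.1 R (Finset.mem_of_mem_erase (Finset.mem_of_mem_erase hR))
  obtain ⟨R, ⟨hRP, hxR⟩, huniq⟩ := hP.2 x
  by_cases hR : R = A ∨ R = B
  · refine ⟨A ∪ B, ⟨Finset.mem_insert_self _ _, ?_⟩, ?_⟩
    · rcases hR with rfl | rfl
      exacts [Set.mem_union_left B hxR, Set.mem_union_right _ hxR]
    rintro R' ⟨hR', hxR'⟩
    rcases Finset.mem_insert.mp hR' with rfl | hR'
    · rfl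
    obtain ⟨hR'B, hR'A, hR'P⟩ : R' ≠ B ∧ R' ≠ A ∧ R' ∈ P := by simpa using hR'
    rcases hR with rfl | rfl
    exacts [absurd (huniq R' ⟨hR'P, hxR'⟩) hR'A, absurd (huniq R' ⟨hR'P, hxR'⟩) hR'B]
  push Not at hR
  refine ⟨R, ⟨Finset.mem_insert_of_mem (by simp [hR.1, hR.2, hRP]), hxR⟩, ?_⟩
  rintro R' ⟨hR', hxR'⟩
  rcases Finset.mem_insert.mp hR' with rfl | hR'
  · rcases hxR' with hxA | hxB
    exacts [absurd (huniq A ⟨hA, hxA⟩).symm hR.1, absurd (huniq B ⟨hB, hxB⟩).symm hR.2]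
  · exact huniq R' ⟨Finset.mem_of_mem_erase (Finset.mem_of_mem_erase hR'), hxR'⟩

theorem neoWeight_mergeParts_add (hP : IsNeoColonization G P) {A B : Set V} (hA : A ∈ P)
    (hB : B ∈ P) (hAB : A ≠ B) {a : V} (ha : a ∈ A) :
    neoWeight G (mergeParts P A B) + partWeight G A + partWeight G B =
      neoWeight G P + partWeight G (A ∪ B) := by
  have hBA : B ∈ P.erase A := Finset.mem_erase.mpr ⟨hAB.symm, hB⟩
  rw [neoWeight, neoWeight, mergeParts,
    Finset.sum_insert (hP.union_notMem_erase_erase hA hB hAB ha),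
    ← Finset.sum_erase_add _ _ hA, ← Finset.sum_erase_add _ _ hBA]
  ring

theorem exists_lt_card_of_singleton_mem [Nontrivial V] (hG : G.Connected)
    (hP : IsNeoColonization G P) {v : V} (hv : {v} ∈ P) :
    ∃ Q, IsNeoColonization G Q ∧ neoWeight G Q ≤ neoWeight G P ∧ Q.card < P.card := by
  obtain ⟨u, hvu⟩ := hG.preconnected.exists_adj_of_nontrivial v
  obtain ⟨S, ⟨hS, huS⟩, -⟩ := hP.2 u
  have hSv : S ≠ {v} := by
    rintro rfl
    exact G.ne_of_adj hvu huS.symm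
  have hmerge := hP.neoWeight_mergeParts_add hS hv hSv huS
  have hweight := partWeight_insert_le (hP.1 S hS) huS hvu.symm
  have hsingleton : partWeight G {v} = 1 := if_pos (Set.pairwise_singleton v G.Adj)
  rw [Set.union_singleton] at hmerge
  exact ⟨mergeParts P S {v}, hP.mergeParts_of_adj hS hv huS rfl hvu.symm, by omega,
    card_mergeParts_lt hS hv hSv⟩

theorem exists_two_le_ncard [Finite V] [Nontrivial V] (hG : G.Connected)
    (hP : IsNeoColonization G P) : ∃ Q, IsNeoColonization G Q ∧
      neoWeight G Q ≤ neoWeight G P ∧ ∀ S ∈ Q, 2 ≤ S.ncard := by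
  induction hn : P.card using Nat.strong_induction_on generalizing P with
  | _ n ih =>
  by_cases hlarge : ∀ S ∈ P, 2 ≤ S.ncard
  · exact ⟨P, hP, le_rfl, hlarge⟩
  push Not at hlarge
  obtain ⟨S, hS, hsmall⟩ := hlarge
  obtain ⟨⟨v, hv⟩⟩ := (hP.1 S hS).nonempty
  have hSv : S = {v} :=
    (Set.ncard_le_one_iff_subsingleton.mp (by omega)).eq_singleton_of_mem hv
  obtain ⟨Q, hQ, hQP, hcard⟩ := hP.exists_lt_card_of_singleton_mem hG (hSv ▸ hS)
  obtain ⟨R, hR, hRQ, hlarge⟩ := ih _ (hn ▸ hcard) hQ rfl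
  exact ⟨R, hR, hRQ.trans hQP, hlarge⟩

end IsNeoColonization

end ED

open ED in
/-- For any tree `T` with at least two vertices, there exists a neo-colonization of
minimum total weight in which every part has size at least two. -/
theorem stmt_0 {V : Type} [Fintype V] (T : SimpleGraph V) (hT : T.IsTree)
    (hn : 2 ≤ Fintype.card V) :
    ∃ P : Finset (Set V), IsNeoColonization T P ∧ neoWeight T P = thetaC T ∧
      ∀ S ∈ P, 2 ≤ S.ncard := by
  have : Nontrivial V := Fintype.one_lt_card_iff_nontrivial.mp hn
  obtain ⟨P, hP, hPmin⟩ := exists_neoWeight_eq_thetaC hT.connected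
  obtain ⟨Q, hQ, hQP, hlarge⟩ := hP.exists_two_le_ncard hT.connected
  exact ⟨Q, hQ, le_antisymm (hPmin ▸ hQP) (thetaC_le_neoWeight hQ), hlarge⟩
end

section
/- For any graph G, the m-eternal domination number of G is at most the minimum weight of a neo-colonization of G, i.e., γ_m^∞(G) ≤ θ_c(G). -/
open scoped Classical

/-!
Each part of an optimal neo-colonization is defended on its own by guards that never leave it;
since the parts are disjoint, these strategies run side by side. A clique needs a single guard,
which answers every attack directly. In a non-clique part `S`, take a minimum connected
dominating set `D` of `G[S]`; it misses a vertex of `S`, because deleting a non-cut vertex of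
`G[S]` leaves a connected dominating set. Keep the guards on `D ∪ {v}` with `v ∈ S \ D`. An
attack at `r ∉ D ∪ {v}` is answered along a path `v, w, …, u` through `D`, where `w, u ∈ D` are
neighbours of `v` and `r`: every guard on it advances one step and the guard on `u` takes `r`,
which leaves the guards on `D ∪ {r}`.
-/

namespace ED

open SimpleGraph Set

variable {V : Type} {G : SimpleGraph V}

def IsGuardMove (G : SimpleGraph V) (D D' : Set V) : Prop :=
  ∃ f : V → V, BijOn f D D' ∧ ∀ v ∈ D, f v = v ∨ G.Adj v (f v)

lemma isGuardMove_refl (D : Set V) : IsGuardMove G D D :=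
  ⟨id, bijOn_id D, fun _ _ => Or.inl rfl⟩

lemma isGuardMove_singleton {v r : V} (h : G.Adj v r) : IsGuardMove G {v} {r} :=
  ⟨fun _ => r, bijOn_singleton.2 rfl, by simp [h]⟩

lemma IsGuardMove.insert_of_adj {D T : Set V} {a b : V} (h : IsGuardMove G (D \ {a}) T)
    (ha : a ∈ D) (hb : b ∉ T) (hab : G.Adj a b) : IsGuardMove G D (insert b T) := by
  obtain ⟨f, hf, hmove⟩ := h
  refine ⟨Function.update f a b, ?_, fun v hv => ?_⟩
  · have hf' : BijOn (Function.update f a b) (D \ {a}) T :=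
      hf.congr fun v hv => (Function.update_of_ne hv.2 _ _).symm
    simpa [insert_eq_of_mem ha] using hf'.insert (a := a) (by simpa using hb)
  · by_cases hva : v = a
    · subst hva
      simp [hab]
    · simpa [hva] using hmove v ⟨hv, hva⟩

lemma IsGuardMove.union_right {D D' E : Set V} (h : IsGuardMove G D D') (hDE : Disjoint D E)
    (hD'E : Disjoint D' E) : IsGuardMove G (D ∪ E) (D' ∪ E) := by
  obtain ⟨f, hf, hmove⟩ := h
  have hfD : BijOn (D.piecewise f id) D D' := hf.congr (piecewise_eqOn D f id).symm
  have hfE : BijOn (D.piecewise f id) E E :=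
    (bijOn_id E).congr fun v hv => (piecewise_eqOn_compl D f id (hDE.subset_compl_left hv)).symm
  refine ⟨D.piecewise f id, hfD.union hfE ?_, fun v hv => ?_⟩
  · exact (injOn_union hDE).2 ⟨hfD.injOn, hfE.injOn, fun x hx y hy =>
      hD'E.ne_of_mem (hfD.mapsTo hx) (hfE.mapsTo hy)⟩
  · by_cases hvD : v ∈ D
    · simpa [hvD] using hmove v hvD
    · simp [hvD]

lemma IsGuardMove.union_left {D E E' : Set V} (h : IsGuardMove G E E') (hDE : Disjoint D E)
    (hDE' : Disjoint D E') : IsGuardMove G (D ∪ E) (D ∪ E') := by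
  simpa only [union_comm D] using h.union_right hDE.symm hDE'.symm

/-- Every guard on the path moves to its successor, the one on `b` to `r`. -/
lemma isGuardMove_of_isPath {a b r : V} {D : Set V} (p : G.Walk a b) (hp : p.IsPath)
    (hpD : ∀ x ∈ p.support, x ∈ D) (hr : r ∉ D) (hbr : G.Adj b r) :
    IsGuardMove G D (insert r (D \ {a})) := by
  induction p generalizing D with
  | nil => exact (isGuardMove_refl _).insert_of_adj (hpD _ (by simp)) (fun h => hr h.1) hbr
  | @cons a c b hac q ih =>
    rw [Walk.cons_isPath_iff] at hp
    have hcD : c ∈ D \ {a} :=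
      ⟨hpD c (by simp), fun h => hp.2 ((mem_singleton_iff.1 h) ▸ q.start_mem_support)⟩
    have hq : IsGuardMove G (D \ {a}) (insert r ((D \ {a}) \ {c})) :=
      ih (D := D \ {a}) hp.1
        (fun x hx => ⟨hpD x (by simp [hx]), fun h => hp.2 ((mem_singleton_iff.1 h) ▸ hx)⟩)
        (fun h => hr h.1) hbr
    have hcr : c ∉ insert r ((D \ {a}) \ {c}) := by
      rintro (h | h)
      · exact hr (h ▸ hcD.1)
      · exact h.2 rfl
    have hmove := hq.insert_of_adj (hpD a (by simp)) hcr hac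
    rwa [insert_comm, insert_sdiff_singleton, insert_eq_of_mem hcD] at hmove

lemma exists_isPath_of_connected_induce {s : Set V} (hs : (G.induce s).Connected) {u v : V}
    (hu : u ∈ s) (hv : v ∈ s) : ∃ p : G.Walk u v, p.IsPath ∧ ∀ x ∈ p.support, x ∈ s := by
  obtain ⟨q, hq⟩ := (hs.preconnected ⟨u, hu⟩ ⟨v, hv⟩).exists_isPath
  have hqs : ∀ x ∈ (q.map (Embedding.induce s).toHom).support, x ∈ s := by
    simp only [Walk.support_map, List.mem_map]
    rintro _ ⟨y, -, rfl⟩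
    exact y.2
  exact ⟨_, hq.map Subtype.val_injective, hqs⟩

lemma exists_connDomSet_ncard_eq (hG : G.Connected) :
    ∃ D : Set V, IsDomSet G D ∧ (G.induce D).Connected ∧ D.ncard = connDomNum G := by
  have hne : {n | ∃ D : Set V, IsDomSet G D ∧ (G.induce D).Connected ∧ D.ncard = n}.Nonempty :=
    ⟨_, univ, fun v hv => (hv (mem_univ v)).elim, (induceUnivIso G).connected_iff.2 hG, rfl⟩
  exact Nat.sInf_mem hne

lemma connDomNum_lt_card [Finite V] [Nontrivial V] (hG : G.Connected) :
    connDomNum G < Nat.card V := by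
  obtain ⟨x, hx⟩ := hG.exists_connected_induce_compl_singleton_of_finite_nontrivial
  obtain ⟨y, hxy⟩ := hG.preconnected.exists_adj_of_nontrivial x
  have hdom : IsDomSet G {x}ᶜ := fun v hv => by
    rw [notMem_compl_iff, mem_singleton_iff] at hv
    exact ⟨y, hxy.ne.symm, hv ▸ hxy.symm⟩
  calc connDomNum G ≤ ({x}ᶜ : Set V).ncard := Nat.sInf_le ⟨_, hdom, hx, rfl⟩
    _ < Nat.card V := ncard_lt_card (compl_ne_univ.2 (singleton_nonempty x))

lemma exists_connDomSet_induce_ncard_eq {S : Set V} (hS : (G.induce S).Connected) :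
    ∃ D ⊆ S, (∀ v ∈ S, v ∉ D → ∃ u ∈ D, G.Adj u v) ∧ (G.induce D).Connected ∧
      D.ncard = connDomNum (G.induce S) := by
  obtain ⟨D, hdom, hconn, hcard⟩ := exists_connDomSet_ncard_eq hS
  refine ⟨Subtype.val '' D, Subtype.coe_image_subset S D, fun v hvS hvD => ?_, ?_, ?_⟩
  · obtain ⟨u, huD, huv⟩ := hdom ⟨v, hvS⟩ fun h => hvD ⟨_, h, rfl⟩
    exact ⟨u, mem_image_of_mem _ huD, huv⟩
  · refine hconn.map ⟨fun v => ⟨v.1.1, mem_image_of_mem _ v.2⟩, fun h => h⟩ ?_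
    rintro ⟨_, v, hv, rfl⟩
    exact ⟨⟨v, hv⟩, rfl⟩
  · rw [ncard_image_of_injective _ Subtype.val_injective, hcard]

def CanDefendOn (G : SimpleGraph V) (S : Set V) (k : ℕ) : Prop :=
  ∃ F : Set (Set V), F.Nonempty ∧
    (∀ D ∈ F, D ⊆ S ∧ D.ncard = k ∧ ∀ v ∈ S, v ∉ D → ∃ u ∈ D, G.Adj u v) ∧
    ∀ D ∈ F, ∀ r ∈ S, r ∉ D → ∃ D' ∈ F, r ∈ D' ∧ IsGuardMove G D D'

lemma canDefendOn_empty : CanDefendOn G ∅ 0 :=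
  ⟨{∅}, singleton_nonempty _, by simp, by simp⟩

lemma canDefendOn_of_isClique {S : Set V} (hS : S.Nonempty) (hcl : G.IsClique S) :
    CanDefendOn G S 1 := by
  refine ⟨(fun v => {v}) '' S, hS.image _, ?_, ?_⟩
  · rintro _ ⟨v, hv, rfl⟩
    exact ⟨singleton_subset_iff.2 hv, ncard_singleton v,
      fun u hu huv => ⟨v, rfl, hcl hv hu (Ne.symm huv)⟩⟩
  · rintro _ ⟨v, hv, rfl⟩ r hr hrv
    exact ⟨{r}, mem_image_of_mem _ hr, rfl, isGuardMove_singleton (hcl hv hr (Ne.symm hrv))⟩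

lemma canDefendOn_of_connected_of_not_isClique [Finite V] {S : Set V} (hS : (G.induce S).Connected)
    (hncl : ¬ G.IsClique S) : CanDefendOn G S (1 + connDomNum (G.induce S)) := by
  obtain ⟨D, hDS, hdom, hconn, hcard⟩ := exists_connDomSet_induce_ncard_eq hS
  have : Nontrivial S :=
    nontrivial_coe_sort.2 (not_subsingleton_iff.1 fun h => hncl (h.pairwise _))
  have hlt : D.ncard < S.ncard := by
    rw [hcard, ← Nat.card_coe_set_eq]
    exact connDomNum_lt_card hS
  obtain ⟨v₀, hv₀S, hv₀D⟩ := exists_mem_notMem_of_ncard_lt_ncard hlt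
  refine ⟨(insert · D) '' (S \ D), ⟨_, mem_image_of_mem _ ⟨hv₀S, hv₀D⟩⟩, ?_, ?_⟩
  · rintro _ ⟨v, ⟨hvS, hvD⟩, rfl⟩
    refine ⟨insert_subset hvS hDS, by rw [ncard_insert_of_notMem hvD, hcard, add_comm],
      fun x hxS hx => ?_⟩
    obtain ⟨u, huD, hux⟩ := hdom x hxS fun h => hx (mem_insert_of_mem _ h)
    exact ⟨u, mem_insert_of_mem _ huD, hux⟩
  · rintro _ ⟨v, ⟨hvS, hvD⟩, rfl⟩ r hrS hr
    have hrD : r ∉ D := fun h => hr (mem_insert_of_mem _ h)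
    obtain ⟨u, huD, hur⟩ := hdom r hrS hrD
    obtain ⟨w, hwD, hwv⟩ := hdom v hvS hvD
    obtain ⟨p, hp, hpD⟩ := exists_isPath_of_connected_induce hconn hwD huD
    have hmove := isGuardMove_of_isPath (D := insert v D) (p.cons hwv.symm)
      ((Walk.cons_isPath_iff _ _).2 ⟨hp, fun h => hvD (hpD v h)⟩) ?_ hr hur
    · refine ⟨insert r D, mem_image_of_mem _ ⟨hrS, hrD⟩, mem_insert r D, ?_⟩
      rwa [insert_sdiff_self_of_notMem hvD] at hmove
    · intro x hx
      rw [Walk.support_cons, List.mem_cons] at hx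
      rcases hx with rfl | hx
      · exact mem_insert x D
      · exact mem_insert_of_mem v (hpD x hx)

lemma CanDefendOn.union [Finite V] {S T : Set V} {k l : ℕ} (hS : CanDefendOn G S k)
    (hT : CanDefendOn G T l) (hST : Disjoint S T) : CanDefendOn G (S ∪ T) (k + l) := by
  obtain ⟨F, hFne, hF, hFdef⟩ := hS
  obtain ⟨F', hF'ne, hF', hF'def⟩ := hT
  have hdisj : ∀ D ∈ F, ∀ E ∈ F', Disjoint D E := fun D hD E hE =>
    hST.mono (hF D hD).1 (hF' E hE).1
  refine ⟨image2 (· ∪ ·) F F', hFne.image2 hF'ne, ?_, ?_⟩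
  · rintro _ ⟨D, hD, E, hE, rfl⟩
    obtain ⟨hDS, hDk, hDdom⟩ := hF D hD
    obtain ⟨hET, hEl, hEdom⟩ := hF' E hE
    refine ⟨union_subset_union hDS hET, by rw [ncard_union_eq (hdisj D hD E hE), hDk, hEl], ?_⟩
    rintro v (hv | hv) hvDE
    · obtain ⟨u, hu, huv⟩ := hDdom v hv fun h => hvDE (Or.inl h)
      exact ⟨u, Or.inl hu, huv⟩
    · obtain ⟨u, hu, huv⟩ := hEdom v hv fun h => hvDE (Or.inr h)
      exact ⟨u, Or.inr hu, huv⟩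
  · rintro _ ⟨D, hD, E, hE, rfl⟩ r (hr | hr) hrDE
    · obtain ⟨D', hD', hrD', hmove⟩ := hFdef D hD r hr fun h => hrDE (Or.inl h)
      exact ⟨D' ∪ E, mem_image2_of_mem hD' hE, Or.inl hrD',
        hmove.union_right (hdisj D hD E hE) (hdisj D' hD' E hE)⟩
    · obtain ⟨E', hE', hrE', hmove⟩ := hF'def E hE r hr fun h => hrDE (Or.inr h)
      exact ⟨D ∪ E', mem_image2_of_mem hD hE', Or.inr hrE',
        hmove.union_left (hdisj D hD E hE) (hdisj D hD E' hE')⟩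

lemma canDefendOn_biUnion [Finite V] {ι : Type*} (P : Finset ι) (S : ι → Set V) (k : ι → ℕ)
    (hdisj : (P : Set ι).PairwiseDisjoint S) (h : ∀ i ∈ P, CanDefendOn G (S i) (k i)) :
    CanDefendOn G (⋃ i ∈ P, S i) (∑ i ∈ P, k i) := by
  induction P using Finset.induction_on with
  | empty => simpa using canDefendOn_empty
  | insert i P hi ih =>
    rw [Finset.coe_insert, pairwiseDisjoint_insert_of_notMem (by simpa using hi)] at hdisj
    rw [Finset.set_biUnion_insert, Finset.sum_insert hi]
    refine (h i (Finset.mem_insert_self i P)).union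
      (ih hdisj.1 fun j hj => h j (Finset.mem_insert_of_mem hj)) ?_
    exact disjoint_iUnion₂_right.2 hdisj.2

lemma canDefendAllMove_of_canDefendOn_univ {k : ℕ} (h : CanDefendOn G univ k) :
    CanDefendAllMove G k := by
  obtain ⟨F, hFne, hF, hFdef⟩ := h
  exact ⟨F, hFne, fun D hD => ⟨fun v hv => (hF D hD).2.2 v (mem_univ v) hv, (hF D hD).2.1⟩,
    fun D hD r hr => hFdef D hD r (mem_univ r) hr⟩

lemma canDefendOn_partWeight [Finite V] {S : Set V} (hS : (G.induce S).Connected) :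
    CanDefendOn G S (partWeight G S) := by
  unfold partWeight
  split_ifs with hcl
  · exact canDefendOn_of_isClique (nonempty_coe_sort.1 hS.nonempty) hcl
  · exact canDefendOn_of_connected_of_not_isClique hS hcl

lemma IsNeoColonization.canDefendAllMove [Finite V] {P : Finset (Set V)}
    (hP : IsNeoColonization G P) : CanDefendAllMove G (neoWeight G P) := by
  have hdisj : (P : Set (Set V)).PairwiseDisjoint id := fun S hS T hT hST =>
    disjoint_left.2 fun v hvS hvT => hST ((hP.2 v).unique ⟨hS, hvS⟩ ⟨hT, hvT⟩)
  have hcover : ⋃ S ∈ P, id S = univ := eq_univ_of_forall fun v => by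
    obtain ⟨S, ⟨hS, hvS⟩, -⟩ := hP.2 v
    exact mem_biUnion hS hvS
  apply canDefendAllMove_of_canDefendOn_univ
  rw [← hcover]
  exact canDefendOn_biUnion P id (partWeight G) hdisj fun S hS => canDefendOn_partWeight (hP.1 S hS)

lemma isNeoColonization_singletons [Fintype V] (G : SimpleGraph V) :
    IsNeoColonization G (Finset.univ.image fun v => ({v} : Set V)) := by
  refine ⟨?_, fun v => ⟨{v}, ⟨by simp, rfl⟩, ?_⟩⟩
  · intro S hS
    obtain ⟨v, -, rfl⟩ := Finset.mem_image.1 hS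
    simp
  · rintro S ⟨hS, hvS⟩
    obtain ⟨w, -, rfl⟩ := Finset.mem_image.1 hS
    rw [mem_singleton_iff.1 hvS]

end ED

open ED in
/-- For any graph `G`, the m-eternal domination number is at most the minimum weight
of a neo-colonization: `γ_m^∞(G) ≤ θ_c(G)`. -/
theorem stmt_1 {V : Type} [Fintype V] (G : SimpleGraph V) :
    mEternalDomNum G ≤ thetaC G := by
  have hne : {w | ∃ P : Finset (Set V), IsNeoColonization G P ∧ neoWeight G P = w}.Nonempty :=
    ⟨_, _, isNeoColonization_singletons G, rfl⟩
  obtain ⟨P, hP, hPw⟩ := Nat.sInf_mem hne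
  rw [thetaC, ← hPw]
  exact Nat.sInf_le hP.canDefendAllMove
end

section
/- For any tree T on n ≥ 3 vertices, the connected domination number of T equals n minus the number of leaves of T. -/
open scoped Classical

/-! The non-leaves form a connected dominating set: once `n ≥ 3` the neighbour of a leaf is not a
leaf, and deleting leaves keeps a graph connected. Conversely a connected dominating set `D` of a
tree contains every non-leaf `v`: otherwise `v` has a neighbour `u ∈ D` and another neighbour `a`,
and `D ∪ {a}` joins `a` to `u` avoiding `v`, which closes a cycle through `v`. -/

open SimpleGraph

namespace ED

variable {V : Type} {G : SimpleGraph V} {u v : V}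

lemma IsLeaf.neighborSet_subsingleton (hv : IsLeaf G v) : (G.neighborSet v).Subsingleton := by
  obtain ⟨w, hw⟩ := Set.ncard_eq_one.mp hv
  exact hw ▸ Set.subsingleton_singleton

lemma IsLeaf.exists_adj (hv : IsLeaf G v) : ∃ u, G.Adj v u :=
  Set.nonempty_of_ncard_ne_zero (hv ▸ one_ne_zero)

lemma exists_adj_ne_of_not_isLeaf (hv : ¬IsLeaf G v) (hu : G.Adj v u) :
    ∃ a, G.Adj v a ∧ a ≠ u := by
  by_contra! h
  exact hv (Set.ncard_eq_one.mpr ⟨u, Set.eq_singleton_iff_unique_mem.mpr ⟨hu, h⟩⟩)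

lemma IsDomSet.nonempty [Nonempty V] {D : Set V} (hD : IsDomSet G D) : D.Nonempty := by
  obtain ⟨v⟩ := ‹Nonempty V›
  by_cases hv : v ∈ D
  · exact ⟨v, hv⟩
  · obtain ⟨u, hu, -⟩ := hD v hv
    exact ⟨u, hu⟩

lemma connDomNum_eq_ncard_of_forall_subset [Finite V] {D₀ : Set V} (hdom : IsDomSet G D₀)
    (hconn : (G.induce D₀).Connected)
    (hmin : ∀ D, IsDomSet G D → (G.induce D).Connected → D₀ ⊆ D) :
    connDomNum G = D₀.ncard :=
  le_antisymm (Nat.sInf_le ⟨D₀, hdom, hconn, rfl⟩) <|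
    le_csInf ⟨_, D₀, hdom, hconn, rfl⟩ <| by
      rintro _ ⟨D, hD, hDc, rfl⟩
      exact Set.ncard_le_ncard (hmin D hD hDc)

end ED

open ED

namespace SimpleGraph

variable {V : Type} {G : SimpleGraph V} {u v a : V}

lemma Reachable.exists_walk_support_subset_of_induce {s : Set V} {x y : s}
    (h : (G.induce s).Reachable x y) : ∃ p : G.Walk x y, ∀ z ∈ p.support, z ∈ s := by
  obtain ⟨q⟩ := h
  refine ⟨q.map (Embedding.induce s).toHom, fun z hz => ?_⟩
  obtain ⟨z', -, rfl⟩ := List.mem_map.mp (Walk.support_map _ q ▸ hz)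
  exact z'.2

lemma Connected.eq_or_eq_of_adj_of_isLeaf (hG : G.Connected) (huv : G.Adj u v)
    (hu : IsLeaf G u) (hv : IsLeaf G v) (w : V) : w = u ∨ w = v := by
  by_contra! hw
  obtain ⟨p, hp⟩ := hG.preconnected.exists_isPath u w
  have hnil : ¬p.Nil := Walk.not_nil_of_ne hw.1.symm
  have hsnd : p.snd = v := hu.neighborSet_subsingleton (p.adj_snd hnil) huv
  exact hp.not_mem_support_of_subsingleton_neighborSet huv.ne' hw.2.symm
    hv.neighborSet_subsingleton (hsnd ▸ List.mem_of_mem_tail (Walk.snd_mem_tail_support hnil))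

lemma Connected.not_isLeaf_of_adj_of_isLeaf [Fintype V] (hG : G.Connected)
    (hV : 3 ≤ Fintype.card V) (huv : G.Adj u v) (hu : IsLeaf G u) : ¬IsLeaf G v := by
  intro hv
  obtain ⟨a, b, c, hab, hac, hbc⟩ := Fintype.two_lt_card_iff.mp hV
  have h := hG.eq_or_eq_of_adj_of_isLeaf huv hu hv
  have := h a; have := h b; have := h c
  grind

lemma Connected.isDomSet_setOf_not_isLeaf [Fintype V] (hG : G.Connected)
    (hV : 3 ≤ Fintype.card V) : IsDomSet G {v | ¬IsLeaf G v} := by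
  intro v hv
  replace hv : IsLeaf G v := not_not.mp hv
  obtain ⟨u, hvu⟩ := hv.exists_adj
  exact ⟨u, hG.not_isLeaf_of_adj_of_isLeaf hV hvu hv, hvu.symm⟩

lemma IsAcyclic.eq_of_adj_of_notMem_support (hG : G.IsAcyclic) (ha : G.Adj v a)
    (hu : G.Adj v u) (p : G.Walk a u) (hv : v ∉ p.support) : a = u := by
  have hpath : (p.bypass.cons ha).IsPath :=
    p.bypass_isPath.cons fun h => hv (p.support_bypass_subset_support h)
  simpa using (hG.eq_snd_of_adj_start hpath hu (by simp)).symm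

lemma IsAcyclic.setOf_not_isLeaf_subset (hG : G.IsAcyclic) {D : Set V} (hD : IsDomSet G D)
    (hDc : (G.induce D).Preconnected) : {v | ¬IsLeaf G v} ⊆ D := by
  intro v hv
  by_contra hvD
  obtain ⟨u, huD, huv⟩ := hD v hvD
  obtain ⟨a, hva, hau⟩ := exists_adj_ne_of_not_isLeaf hv huv.symm
  have walk_to_u : ∀ x ∈ D, ∃ p : G.Walk x u, v ∉ p.support := fun x hx => by
    obtain ⟨p, hp⟩ := (hDc ⟨x, hx⟩ ⟨u, huD⟩).exists_walk_support_subset_of_induce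
    exact ⟨p, fun h => hvD (hp v h)⟩
  suffices ∃ p : G.Walk a u, v ∉ p.support by
    obtain ⟨p, hp⟩ := this
    exact hau (hG.eq_of_adj_of_notMem_support hva huv.symm p hp)
  by_cases haD : a ∈ D
  · exact walk_to_u a haD
  · obtain ⟨x, hxD, hxa⟩ := hD a haD
    obtain ⟨p, hp⟩ := walk_to_u x hxD
    exact ⟨p.cons hxa.symm, by simpa [hva.ne] using hp⟩

end SimpleGraph

open ED in
/-- For any tree `T` on `n ≥ 3` vertices, the connected domination number equals
`n` minus the number of leaves. -/
theorem stmt_3 {V : Type} [Fintype V] (T : SimpleGraph V) (hT : T.IsTree)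
    (hn : 3 ≤ Fintype.card V) :
    connDomNum T = Fintype.card V - {v | IsLeaf T v}.ncard := by
  have hconn : T.Connected := hT.connected
  have hdom := hconn.isDomSet_setOf_not_isLeaf hn
  have : Nonempty V := Fintype.card_pos_iff.mp (by omega)
  have hinduce : (T.induce {v | ¬IsLeaf T v}).Connected :=
    have := hdom.nonempty.to_subtype
    Connected.mk <| hconn.preconnected.induce_of_degree_eq_one fun _ hv =>
      IsLeaf.neighborSet_subsingleton (not_not.mp hv)
  rw [connDomNum_eq_ncard_of_forall_subset hdom hinduce fun _ hD hDc =>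
      hT.isAcyclic.setOf_not_isLeaf_subset hD hDc.preconnected,
    ← Nat.card_eq_fintype_card, ← Set.ncard_compl, Set.compl_ofPred]
end

section
/- A connected graph G on 2n vertices that is a corona has domination number n, and admits a neo-colonization of weight n (so for a tree T that is a corona, γ_m^∞(T) = γ(T) = |V(T)|/2). -/
open scoped Classical

namespace ED

variable {V : Type}

/-- The corona of a graph `H`: add a pendant vertex to each vertex of `H`. -/
def coronaGraph {W : Type} (H : SimpleGraph W) : SimpleGraph (W ⊕ W) :=
  SimpleGraph.fromRel (fun a b =>
    match a, b with
    | Sum.inl x, Sum.inl y => H.Adj x y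
    | Sum.inl x, Sum.inr y => x = y
    | _, _ => False)

/-- `G` is a corona: isomorphic to the corona of some graph. -/
def IsCorona (G : SimpleGraph V) : Prop :=
  ∃ (W : Type) (_ : Fintype W) (H : SimpleGraph W), Nonempty (G ≃g coronaGraph H)

end ED

/-! A corona on `2n` vertices pairs each vertex `s w` of the base graph with its pendant
vertex `t w`. A dominating set must meet every pair, since `t w` can only be dominated from
within its pair, and these `n` pairs are disjoint; conversely the base vertices dominate.
The pairs are edges, hence cliques of weight one, and they form a neo-colonization of
weight `n`. -/

namespace ED

open SimpleGraph

variable {V : Type} {G : SimpleGraph V}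

lemma partWeight_pair_of_adj {a b : V} (h : G.Adj a b) : partWeight G {a, b} = 1 :=
  if_pos (isClique_pair.2 fun _ => h)

lemma isDomSet_univ : IsDomSet G Set.univ := fun _ hv => absurd (Set.mem_univ _) hv

lemma domNum_le {D : Set V} (hD : IsDomSet G D) : domNum G ≤ D.ncard :=
  Nat.sInf_le ⟨D, hD, rfl⟩

lemma le_domNum {m : ℕ} (h : ∀ D, IsDomSet G D → m ≤ D.ncard) : m ≤ domNum G :=
  le_csInf ⟨_, Set.univ, isDomSet_univ, rfl⟩ fun _ ⟨D, hD, hm⟩ => hm ▸ h D hD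

section Pairs

variable {W : Type} {s t : W → V}

lemma injective_pair (hpart : ∀ v, ∃! w, v ∈ ({s w, t w} : Set V)) :
    Function.Injective fun w => ({s w, t w} : Set V) := fun w _ h =>
  (hpart (s w)).unique (Set.mem_insert _ _) ((Set.ext_iff.1 h (s w)).1 (Set.mem_insert _ _))

lemma exists_neoColonization_of_pairs [Fintype W] (hadj : ∀ w, G.Adj (s w) (t w))
    (hpart : ∀ v, ∃! w, v ∈ ({s w, t w} : Set V)) :
    ∃ P : Finset (Set V), IsNeoColonization G P ∧ neoWeight G P = Fintype.card W := by
  refine ⟨Finset.univ.image fun w => {s w, t w}, ⟨?_, fun v => ?_⟩, ?_⟩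
  · simp only [Finset.mem_image, Finset.mem_univ, true_and, forall_exists_index,
      forall_apply_eq_imp_iff]
    exact fun w => induce_pair_connected_of_adj (hadj w)
  · obtain ⟨w, hvw, huniq⟩ := hpart v
    refine ⟨{s w, t w}, ⟨Finset.mem_image_of_mem _ (Finset.mem_univ w), hvw⟩, ?_⟩
    rintro _ ⟨hS, hvS⟩
    obtain ⟨w', -, rfl⟩ := Finset.mem_image.1 hS
    rw [huniq w' hvS]
  · rw [neoWeight, Finset.sum_image fun w _ w' _ h => injective_pair hpart h]
    simp [partWeight_pair_of_adj (hadj _)]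

structure IsPendantPairing (G : SimpleGraph V) (s t : W → V) : Prop where
  adj : ∀ w, G.Adj (s w) (t w)
  partition : ∀ v, ∃! w, v ∈ ({s w, t w} : Set V)
  pendant : ∀ w u, G.Adj u (t w) → u = s w

namespace IsPendantPairing

lemma injective_left (h : IsPendantPairing G s t) : Function.Injective s := fun w _ hw =>
  (h.partition (s w)).unique (Set.mem_insert _ _) (hw ▸ Set.mem_insert _ _)

lemma isDomSet_range_left (h : IsPendantPairing G s t) : IsDomSet G (Set.range s) := by
  intro v hv
  obtain ⟨w, hvw, -⟩ := h.partition v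
  rcases hvw with rfl | rfl
  · exact absurd ⟨w, rfl⟩ hv
  · exact ⟨s w, ⟨w, rfl⟩, h.adj w⟩

lemma exists_mem_pair_of_isDomSet (h : IsPendantPairing G s t) {D : Set V} (hD : IsDomSet G D)
    (w : W) :
    ∃ v ∈ D, v ∈ ({s w, t w} : Set V) := by
  by_cases htw : t w ∈ D
  · exact ⟨t w, htw, by simp⟩
  · obtain ⟨u, hu, hut⟩ := hD _ htw
    exact ⟨u, hu, by simp [h.pendant w u hut]⟩

lemma domNum_eq [Fintype W] [Finite V] (h : IsPendantPairing G s t) :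
    domNum G = Fintype.card W := by
  refine le_antisymm ?_ (le_domNum fun D hD => ?_)
  · calc domNum G ≤ (Set.range s).ncard := domNum_le h.isDomSet_range_left
      _ = Fintype.card W := by
        rw [Set.ncard_range_of_injective h.injective_left, Nat.card_eq_fintype_card]
  · choose g hgD hg using h.exists_mem_pair_of_isDomSet hD
    have hg_inj : Function.Injective g := fun w w' hw =>
      (h.partition (g w)).unique (hg w) (hw ▸ hg w')
    calc Fintype.card W = (Set.range g).ncard := by
          rw [Set.ncard_range_of_injective hg_inj, Nat.card_eq_fintype_card]
      _ ≤ D.ncard := Set.ncard_le_ncard (Set.range_subset_iff.2 hgD)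

end IsPendantPairing

end Pairs

lemma coronaGraph_adj_inl_inr {W : Type} (H : SimpleGraph W) (w : W) :
    (coronaGraph H).Adj (.inl w) (.inr w) := by
  simp [coronaGraph]

lemma eq_inl_of_coronaGraph_adj_inr {W : Type} {H : SimpleGraph W} {u : W ⊕ W} {w : W}
    (h : (coronaGraph H).Adj u (.inr w)) : u = .inl w := by
  cases u <;> simp_all [coronaGraph]

lemma IsCorona.exists_isPendantPairing [Fintype V] (hcor : IsCorona G) :
    ∃ (W : Type) (_ : Fintype W) (s t : W → V),
      IsPendantPairing G s t ∧ Fintype.card V = 2 * Fintype.card W := by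
  obtain ⟨W, _, H, ⟨e⟩⟩ := hcor
  have hcard : Fintype.card V = 2 * Fintype.card W := by
    rw [Fintype.card_congr e.toEquiv, Fintype.card_sum, two_mul]
  refine ⟨W, inferInstance, fun w => e.symm (.inl w), fun w => e.symm (.inr w), ⟨?_, ?_, ?_⟩,
    hcard⟩
  · exact fun w => e.symm.map_adj_iff.2 (coronaGraph_adj_inl_inr H w)
  · intro v
    simp only [Set.mem_insert_iff, Set.mem_singleton_iff, RelIso.eq_symm_apply]
    generalize e v = x
    rcases x with w | w <;> exact ⟨w, by simp, fun _ => by simp [eq_comm]⟩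
  · intro w u hu
    rw [RelIso.eq_symm_apply]
    exact eq_inl_of_coronaGraph_adj_inr (by simpa using e.map_adj_iff.2 hu)

end ED

open ED in
theorem stmt_8_general {V : Type} [Fintype V] (G : SimpleGraph V) (n : ℕ)
    (hcor : IsCorona G) (hcard : Fintype.card V = 2 * n) :
    domNum G = n ∧
      ∃ P : Finset (Set V), IsNeoColonization G P ∧ neoWeight G P = n := by
  obtain ⟨W, _, s, t, hst, hcardW⟩ := hcor.exists_isPendantPairing
  obtain rfl : Fintype.card W = n := by omega
  exact ⟨hst.domNum_eq, exists_neoColonization_of_pairs hst.adj hst.partition⟩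

open ED in
/-- A connected graph `G` on `2n` vertices that is a corona has domination number `n`
and admits a neo-colonization of weight `n`. -/
theorem stmt_8 {V : Type} [Fintype V] (G : SimpleGraph V) (n : ℕ)
    (hconn : G.Connected) (hcor : IsCorona G) (hcard : Fintype.card V = 2 * n) :
    domNum G = n ∧
      ∃ P : Finset (Set V), IsNeoColonization G P ∧ neoWeight G P = n :=
  stmt_8_general G n hcor hcard
end

section
/- For any connected graph G, γ_m^∞(G) ≤ 2γ(G). -/
/-!
Fix a minimum dominating set `D` and send every vertex `v ∉ D` to a neighbour `d v ∈ D`; this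
cuts `Dᶜ` into cells, one for each vertex of `D`. Keep a guard on every vertex of `D` and one
extra guard in every nonempty cell, at most `2|D|` guards in all. When `r` is attacked, the extra
guard of the cell of `u = d r` steps to `u` while the guard on `u` steps to `r`; now `r` carries
the extra guard of that cell, so the configuration keeps its shape.
-/

open scoped Classical

theorem Set.bijOn_insert_sdiff_singleton {α β : Type*} {f : α → β} {s : Set α} {t : Set β}
    {a b : α} (h : Set.BijOn f s t) (ha : a ∈ s) (hab : f b = f a) :
    Set.BijOn f (insert b (s \ {a})) t := by
  have key := (h.sdiff_singleton ha).insert (a := b) (by simp [hab])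
  rwa [hab, Set.insert_sdiff_singleton, Set.insert_eq_of_mem (h.mapsTo ha)] at key

namespace ED

variable {V : Type} {G : SimpleGraph V}

theorem IsDomSet.mono {D D' : Set V} (hD : IsDomSet G D) (h : D ⊆ D') : IsDomSet G D' := by
  intro v hv
  obtain ⟨u, hu, huv⟩ := hD v (fun h' => hv (h h'))
  exact ⟨u, h hu, huv⟩

theorem IsDomSet.exists_dominator {D : Set V} (hD : IsDomSet G D) :
    ∃ d : V → V, ∀ v ∉ D, d v ∈ D ∧ G.Adj (d v) v := by
  have (v : V) : ∃ u, v ∉ D → u ∈ D ∧ G.Adj u v := by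
    by_cases hv : v ∈ D
    · exact ⟨v, fun h => absurd hv h⟩
    · obtain ⟨u, hu, huv⟩ := hD v hv
      exact ⟨u, fun _ => ⟨hu, huv⟩⟩
  choose d hd using this
  exact ⟨d, hd⟩

theorem exists_guardMove_of_adj_of_adj {C : Set V} {s u r : V} (hs : s ∈ C) (hu : u ∈ C)
    (hr : r ∉ C) (hsu : G.Adj s u) (hur : G.Adj u r) :
    ∃ f : V → V, Set.BijOn f C (insert r (C \ {s})) ∧ ∀ v ∈ C, f v = v ∨ G.Adj v (f v) := by
  have hsr : s ≠ r := by rintro rfl; exact hr hs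
  have hsu_ne := hsu.ne
  have hur_ne := hur.ne
  -- the 3-cycle `s ↦ u ↦ r ↦ s`
  let σ := (Equiv.swap u r).trans (Equiv.swap s u)
  have himage : σ '' C = insert r (C \ {s}) := by
    ext x
    simp only [σ, Equiv.image_eq_preimage_symm, Set.mem_preimage, Equiv.symm_trans_apply,
      Equiv.symm_swap, Set.mem_insert_iff, Set.mem_sdiff, Set.mem_singleton_iff,
      Equiv.swap_apply_def]
    split_ifs <;> grind
  refine ⟨σ, himage ▸ σ.injective.injOn.bijOn_image, fun v hv => ?_⟩
  simp only [σ, Equiv.trans_apply, Equiv.swap_apply_def]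
  split_ifs <;> grind [SimpleGraph.Adj.symm]

/-- Guard configurations `D ∪ S`, where `S` holds exactly one vertex of each nonempty cell
`d ⁻¹' {u} \ D`. -/
def cellConfigs (D : Set V) (d : V → V) : Set (Set V) :=
  {C | ∃ S ⊆ Dᶜ, Set.BijOn d S (d '' Dᶜ) ∧ C = D ∪ S}

theorem cellConfigs_nonempty (D : Set V) (d : V → V) : (cellConfigs D d).Nonempty := by
  obtain ⟨S, hS, hbij⟩ := Set.exists_subset_bijOn Dᶜ d
  exact ⟨D ∪ S, S, hS, hbij, rfl⟩

theorem ncard_of_mem_cellConfigs [Finite V] {D C : Set V} {d : V → V}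
    (hC : C ∈ cellConfigs D d) : C.ncard = D.ncard + (d '' Dᶜ).ncard := by
  obtain ⟨S, hS, hbij, rfl⟩ := hC
  rw [Set.ncard_union_eq (Set.subset_compl_iff_disjoint_left.mp hS), hbij.ncard_eq]

theorem exists_move_of_mem_cellConfigs {D C : Set V} {d : V → V}
    (hd : ∀ v ∉ D, d v ∈ D ∧ G.Adj (d v) v) (hC : C ∈ cellConfigs D d) {r : V} (hr : r ∉ C) :
    ∃ C' ∈ cellConfigs D d, r ∈ C' ∧
      ∃ f : V → V, Set.BijOn f C C' ∧ ∀ v ∈ C, f v = v ∨ G.Adj v (f v) := by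
  obtain ⟨S, hS, hbij, rfl⟩ := hC
  have hrD : r ∉ D := fun h => hr (Or.inl h)
  obtain ⟨s, hs, hsr⟩ := hbij.surjOn ⟨r, hrD, rfl⟩
  have hsD : s ∉ D := hS hs
  have hC' : D ∪ insert r (S \ {s}) = insert r ((D ∪ S) \ {s}) := by
    ext x
    simp only [Set.mem_union, Set.mem_insert_iff, Set.mem_sdiff, Set.mem_singleton_iff]
    grind
  refine ⟨_, ⟨insert r (S \ {s}), ?_, Set.bijOn_insert_sdiff_singleton hbij hs hsr.symm, rfl⟩,
    Or.inr (Set.mem_insert r _), hC' ▸ ?_⟩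
  · exact Set.insert_subset hrD (Set.sdiff_subset.trans hS)
  · have hsu := (hd s hsD).2
    rw [hsr] at hsu
    exact exists_guardMove_of_adj_of_adj (Or.inr hs) (Or.inl (hd r hrD).1) hr hsu.symm
      (hd r hrD).2

theorem canDefendAllMove_of_dominator [Finite V] {D : Set V} {d : V → V}
    (hd : ∀ v ∉ D, d v ∈ D ∧ G.Adj (d v) v) :
    CanDefendAllMove G (D.ncard + (d '' Dᶜ).ncard) := by
  have hD : IsDomSet G D := fun v hv => ⟨d v, hd v hv⟩
  refine ⟨cellConfigs D d, cellConfigs_nonempty D d,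
    fun C hC => ⟨?_, ncard_of_mem_cellConfigs hC⟩,
    fun C hC r hr => exists_move_of_mem_cellConfigs hd hC hr⟩
  obtain ⟨S, -, -, rfl⟩ := hC
  exact hD.mono Set.subset_union_left

end ED

open ED in
theorem stmt_9_general {V : Type} [Fintype V] (G : SimpleGraph V) :
    mEternalDomNum G ≤ 2 * domNum G := by
  obtain ⟨D, hD, hDcard⟩ : domNum G ∈ {n | ∃ D : Set V, IsDomSet G D ∧ D.ncard = n} :=
    Nat.sInf_mem ⟨_, Set.univ, fun v hv => absurd (Set.mem_univ v) hv, rfl⟩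
  obtain ⟨d, hd⟩ := hD.exists_dominator
  have hcells : (d '' Dᶜ).ncard ≤ D.ncard :=
    Set.ncard_le_ncard (Set.image_subset_iff.mpr fun v hv => (hd v hv).1)
  calc mEternalDomNum G ≤ D.ncard + (d '' Dᶜ).ncard :=
        Nat.sInf_le (canDefendAllMove_of_dominator hd)
    _ ≤ 2 * domNum G := by omega

open ED in
/-- For any connected graph `G`, `γ_m^∞(G) ≤ 2γ(G)`. -/
theorem stmt_9 {V : Type} [Fintype V] (G : SimpleGraph V) (hconn : G.Connected) :
    mEternalDomNum G ≤ 2 * domNum G :=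
  stmt_9_general G
end

section
/- If T is a tree with γ_m^∞(T) = 2γ(T) and D is a minimum dominating set of T, then every vertex x ∈ D has at least two external private neighbors with respect to D. -/
open scoped Classical

namespace ED

variable {V : Type}

/-- The set of external private neighbors of `x` with respect to `D`. -/
def epnSet (G : SimpleGraph V) (D : Set V) (x : V) : Set V :=
  {v | v ∉ D ∧ G.Adj x v ∧ ∀ y ∈ D, y ≠ x → ¬ G.Adj y v}

end ED

/-!
Suppose some `x ∈ D` has at most one external private neighbour. Every `y ∈ D \ {x}` can be
matched injectively to a neighbour `s y ∉ D`: by Hall's theorem it suffices that no `S ⊆ D`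
has fewer neighbours outside `D` than elements, and otherwise `(D \ S) ∪ (N(S) \ D)` would be
a smaller dominating set. Now `2γ - 1` guards defend the tree: two guards on each pair
`{y, s y}` and one on `x` or on its private neighbour. An attack at a neighbour `r` of some
`y` is answered by moving the guard on `y` to `r` and the one on `s y` to `y`; every other
attack is at `x` or at its private neighbour, and the lone guard steps across. Hence
`γ_m^∞(T) ≤ 2γ(T) - 1`.
-/

namespace ED

variable {V : Type} {G : SimpleGraph V} {D S : Set V}

lemma domNum_le_ncard (hD : IsDomSet G D) : domNum G ≤ D.ncard :=
  Nat.sInf_le ⟨D, hD, rfl⟩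

lemma mEternalDomNum_le {k : ℕ} (h : CanDefendAllMove G k) : mEternalDomNum G ≤ k :=
  Nat.sInf_le h

lemma IsDomSet.diff_union_outside_neighbors (hD : IsDomSet G D)
    (hS : ∀ y ∈ S, ∃ v ∉ D, G.Adj y v) :
    IsDomSet G ((D \ S) ∪ {v | v ∉ D ∧ ∃ y ∈ S, G.Adj y v}) := by
  intro v hv
  by_cases hvD : v ∈ D
  · have hvS : v ∈ S := by_contra fun hvS => hv (Or.inl ⟨hvD, hvS⟩)
    obtain ⟨u, huD, hvu⟩ := hS v hvS
    exact ⟨u, Or.inr ⟨huD, v, hvS, hvu⟩, hvu.symm⟩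
  · obtain ⟨u, hu, huv⟩ := hD v hvD
    have huS : u ∉ S := fun huS => hv (Or.inr ⟨hvD, u, huS, huv⟩)
    exact ⟨u, Or.inl ⟨hu, huS⟩, huv⟩

lemma mem_epnSet_of_forall_not_adj (hD : IsDomSet G D) {x v : V} (hvD : v ∉ D)
    (hv : ∀ y ∈ D \ {x}, ¬ G.Adj y v) : v ∈ epnSet G D x := by
  obtain ⟨u, hu, huv⟩ := hD v hvD
  obtain rfl : u = x := by_contra fun hux => hv u ⟨hu, hux⟩ huv
  exact ⟨hvD, huv, fun y hy hyu => hv y ⟨hy, hyu⟩⟩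

variable (G) in
def IsOutsideMatching (D A : Set V) (s : V → V) : Prop :=
  Set.InjOn s A ∧ ∀ y ∈ A, G.Adj y (s y) ∧ s y ∉ D

namespace IsOutsideMatching

variable {A : Set V} {s : V → V}

lemma notMem_image (hs : IsOutsideMatching G D A s) {v : V} (hv : v ∈ D) : v ∉ s '' A := by
  rintro ⟨y, hy, rfl⟩
  exact (hs.2 y hy).2 hv

lemma update (hs : IsOutsideMatching G D A s) {y r : V} (hyr : G.Adj y r) (hrD : r ∉ D)
    (hrs : r ∉ s '' A) : IsOutsideMatching G D A (Function.update s y r) := by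
  refine ⟨fun z hz w hw h => ?_, fun z hz => ?_⟩
  · simp only [Function.update_apply] at h
    split_ifs at h with hzy hwy hwy
    · rw [hzy, hwy]
    · exact absurd ⟨w, hw, h.symm⟩ hrs
    · exact absurd ⟨z, hz, h⟩ hrs
    · exact hs.1 hz hw h
  · rw [Function.update_apply]
    split_ifs with hzy
    · exact ⟨hzy ▸ hyr, hrD⟩
    · exact hs.2 z hz

end IsOutsideMatching

variable (G) in
/-- The guard at `P i` goes to `P' (π i)`. -/
def IsLabelledMove {ι : Type*} (P P' : ι → V) : Prop :=
  ∃ π : Equiv.Perm ι, ∀ i, P' (π i) = P i ∨ G.Adj (P i) (P' (π i))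

lemma canDefendAllMove_of_placements {ι : Type*} (Φ : Set (ι → V)) (hne : Φ.Nonempty)
    (hinj : ∀ P ∈ Φ, Function.Injective P) (hdom : ∀ P ∈ Φ, IsDomSet G (Set.range P))
    (hresp : ∀ P ∈ Φ, ∀ r ∉ Set.range P, ∃ P' ∈ Φ, r ∈ Set.range P' ∧ IsLabelledMove G P P') :
    CanDefendAllMove G (Nat.card ι) := by
  refine ⟨Set.range '' Φ, hne.image _, ?_, ?_⟩
  · rintro _ ⟨P, hP, rfl⟩
    exact ⟨hdom P hP, Set.ncard_range_of_injective (hinj P hP)⟩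
  rintro _ ⟨P, hP, rfl⟩ r hr
  obtain ⟨P', hP', hr', π, hmove⟩ := hresp P hP r hr
  have hext : ∀ i, Function.extend P (P' ∘ π) id (P i) = P' (π i) :=
    (hinj P hP).extend_apply _ _
  refine ⟨_, ⟨P', hP', rfl⟩, hr', Function.extend P (P' ∘ π) id, ⟨?_, ?_, ?_⟩, ?_⟩
  · rintro _ ⟨i, rfl⟩
    exact ⟨π i, (hext i).symm⟩
  · rintro _ ⟨i, rfl⟩ _ ⟨j, rfl⟩ h
    rw [hext, hext] at h
    rw [π.injective (hinj P' hP' h)]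
  · rintro _ ⟨j, rfl⟩
    exact ⟨P (π.symm j), ⟨_, rfl⟩, by rw [hext, π.apply_symm_apply]⟩
  · rintro _ ⟨i, rfl⟩
    rw [hext]
    exact hmove i

section Minimum

variable [Finite V]

/-- Otherwise `D \ {y}` would still dominate. -/
lemma exists_adj_notMem_of_ncard_eq_domNum (hD : IsDomSet G D) (hmin : D.ncard = domNum G)
    {y u : V} (hy : y ∈ D) (hyu : G.Adj y u) : ∃ v ∉ D, G.Adj y v := by
  by_contra! hout
  have hdom : IsDomSet G (D \ {y}) := by
    intro v hv
    by_cases hvy : v = y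
    · subst hvy
      exact ⟨u, ⟨by_contra fun hu => hout u hu hyu, hyu.ne.symm⟩, hyu.symm⟩
    · obtain ⟨w, hw, hwv⟩ := hD v fun hvD => hv ⟨hvD, hvy⟩
      exact ⟨w, ⟨hw, by rintro rfl; exact hout v (fun hvD => hv ⟨hvD, hvy⟩) hwv⟩, hwv⟩
  have := domNum_le_ncard hdom
  rw [Set.ncard_sdiff_singleton_of_mem hy] at this
  have := (Set.ncard_pos (Set.toFinite D)).2 ⟨y, hy⟩
  omega

lemma ncard_le_ncard_outside_neighbors (hD : IsDomSet G D) (hmin : D.ncard = domNum G)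
    (hSD : S ⊆ D) (hS : ∀ y ∈ S, ∃ u, G.Adj y u) :
    S.ncard ≤ {v | v ∉ D ∧ ∃ y ∈ S, G.Adj y v}.ncard := by
  have hdom := hD.diff_union_outside_neighbors fun y hy =>
    have ⟨_, hyu⟩ := hS y hy
    exists_adj_notMem_of_ncard_eq_domNum hD hmin (hSD hy) hyu
  have := domNum_le_ncard hdom
  have := Set.ncard_union_le (D \ S) {v | v ∉ D ∧ ∃ y ∈ S, G.Adj y v}
  have := Set.ncard_sdiff hSD
  have := Set.ncard_le_ncard hSD
  omega

lemma exists_isOutsideMatching (hD : IsDomSet G D) (hmin : D.ncard = domNum G) {A : Set V}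
    (hAD : A ⊆ D) (hA : ∀ y ∈ A, ∃ u, G.Adj y u) : ∃ s, IsOutsideMatching G D A s := by
  have := Fintype.ofFinite V
  obtain ⟨f, hf, hfr⟩ := (Fintype.all_card_le_filter_rel_iff_exists_injective
    fun (y : A) v => G.Adj y v ∧ v ∉ D).1 fun S => by
      have hS := ncard_le_ncard_outside_neighbors hD hmin (S := Subtype.val '' (S : Set A))
        (by rintro _ ⟨y, -, rfl⟩; exact hAD y.2) (by rintro _ ⟨y, -, rfl⟩; exact hA y y.2)
      rw [Set.ncard_image_of_injective _ Subtype.val_injective, Set.ncard_coe_finset] at hS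
      convert hS using 1
      rw [← Set.ncard_coe_finset]
      congr 1
      ext v
      simp only [Subtype.exists, exists_and_right, Finset.coe_filter, Finset.mem_univ, true_and,
        Set.mem_ofPred_eq, Set.mem_image, SetLike.mem_coe, exists_eq_right]
      tauto
  refine ⟨fun v => if h : v ∈ A then f ⟨v, h⟩ else v, fun v hv w hw hvw => ?_, fun y hy => ?_⟩
  · exact congrArg Subtype.val (hf (by simpa [hv, hw] using hvw))
  · simpa [hy] using hfr ⟨y, hy⟩

end Minimum

section Strategy

variable {x c r : V} {s : V → V}

variable (D x) in
/-- One guard for `x`, sitting on `x` or on its private neighbour, and for each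
`y ∈ D \ {x}` a guard on `y` and one on `s y`. -/
abbrev GuardLabel : Type := Option ((D \ {x} : Set V) ⊕ (D \ {x} : Set V))

variable (D) in
def guardPlacement (x c : V) (s : V → V) : GuardLabel D x → V :=
  fun o => o.elim c (Sum.elim (↑) (s ∘ (↑)))

variable (G D x) in
def guardPlacements : Set (GuardLabel D x → V) :=
  {P | ∃ c s, IsOutsideMatching G D (D \ {x}) s ∧ (c = x ∨ c ∈ epnSet G D x) ∧
    c ∉ s '' (D \ {x}) ∧ P = guardPlacement D x c s}

lemma guardPlacement_injective (hs : IsOutsideMatching G D (D \ {x}) s)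
    (hc : c = x ∨ c ∈ epnSet G D x) (hcs : c ∉ s '' (D \ {x})) :
    Function.Injective (guardPlacement D x c s) := by
  have hsum : Function.Injective
      (Sum.elim (↑) (s ∘ (↑)) : (D \ {x} : Set V) ⊕ (D \ {x} : Set V) → V) :=
    Subtype.val_injective.sumElim hs.1.injective fun y w h => hs.notMem_image y.2.1 ⟨w, w.2, h.symm⟩
  have hcA : c ∉ D \ {x} := by
    rcases hc with rfl | hc
    exacts [fun h => h.2 rfl, fun h => hc.1 h.1]
  have hc' : ∀ i : (D \ {x} : Set V) ⊕ (D \ {x} : Set V), Sum.elim (↑) (s ∘ (↑)) i ≠ c := by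
    rintro (y | y) rfl
    exacts [hcA y.2, hcs ⟨y, y.2, rfl⟩]
  rintro (_ | i) (_ | j) h
  · rfl
  · exact absurd h.symm (hc' j)
  · exact absurd h (hc' i)
  · exact congrArg some (hsum h)

lemma isDomSet_range_guardPlacement (hD : IsDomSet G D) (hepn : (epnSet G D x).Subsingleton)
    (hc : c = x ∨ c ∈ epnSet G D x) : IsDomSet G (Set.range (guardPlacement D x c s)) := by
  intro v hv
  by_cases hvx : v = x
  · subst hvx
    have hc' : c ∈ epnSet G D v := hc.resolve_left fun hcv => hv ⟨none, hcv⟩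
    exact ⟨c, ⟨none, rfl⟩, hc'.2.1.symm⟩
  have hvD : v ∉ D := fun h => hv ⟨some (.inl ⟨v, h, hvx⟩), rfl⟩
  by_cases hA : ∃ y ∈ D \ {x}, G.Adj y v
  · obtain ⟨y, hy, hyv⟩ := hA
    exact ⟨y, ⟨some (.inl ⟨y, hy⟩), rfl⟩, hyv⟩
  push Not at hA
  have hvepn := mem_epnSet_of_forall_not_adj hD hvD hA
  rcases hc with rfl | hc
  · exact ⟨c, ⟨none, rfl⟩, hvepn.2.1⟩
  · exact absurd ⟨none, hepn hc hvepn⟩ hv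

lemma isLabelledMove_guardPlacement_of_adj {c' : V} (hcc' : G.Adj c c') :
    IsLabelledMove G (guardPlacement D x c s) (guardPlacement D x c' s) :=
  ⟨1, by rintro (_ | _ | _) <;> simp [guardPlacement, hcc']⟩

lemma isLabelledMove_guardPlacement_update (hs : IsOutsideMatching G D (D \ {x}) s) {y : V}
    (hy : y ∈ D \ {x}) (hyr : G.Adj y r) :
    IsLabelledMove G (guardPlacement D x c s) (guardPlacement D x c (Function.update s y r)) := by
  refine ⟨Equiv.swap (some (.inl ⟨y, hy⟩)) (some (.inr ⟨y, hy⟩)), ?_⟩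
  rintro (_ | z | z)
  · rw [Equiv.swap_apply_of_ne_of_ne (by simp) (by simp)]
    exact Or.inl rfl
  · by_cases hz : z = ⟨y, hy⟩
    · subst hz
      rw [Equiv.swap_apply_left]
      simpa [guardPlacement] using Or.inr hyr
    · rw [Equiv.swap_apply_of_ne_of_ne (by simpa) (by simp)]
      exact Or.inl rfl
  · by_cases hz : z = ⟨y, hy⟩
    · subst hz
      rw [Equiv.swap_apply_right]
      simpa [guardPlacement] using Or.inr (hs.2 y hy).1.symm
    · rw [Equiv.swap_apply_of_ne_of_ne (by simp) (by simpa)]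
      have hzy : (z : V) ≠ y := fun h => hz (Subtype.ext h)
      simp [guardPlacement, hzy]

lemma exists_guardPlacement_response (hD : IsDomSet G D) (hepn : (epnSet G D x).Subsingleton)
    {P : GuardLabel D x → V} (hP : P ∈ guardPlacements G D x)
    (hr : r ∉ Set.range P) :
    ∃ P' ∈ guardPlacements G D x, r ∈ Set.range P' ∧ IsLabelledMove G P P' := by
  obtain ⟨c, s, hs, hc, hcs, rfl⟩ := hP
  have hcr : c ≠ r := fun h => hr ⟨none, h⟩
  have hrA : r ∉ D \ {x} := fun h => hr ⟨some (.inl ⟨r, h⟩), rfl⟩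
  have hrs : r ∉ s '' (D \ {x}) := by
    rintro ⟨y, hy, rfl⟩
    exact hr ⟨some (.inr ⟨y, hy⟩), rfl⟩
  by_cases hrx : r = x
  · subst hrx
    have hc' : c ∈ epnSet G D r := hc.resolve_left hcr
    exact ⟨_, ⟨r, s, hs, Or.inl rfl, hrs, rfl⟩, ⟨none, rfl⟩,
      isLabelledMove_guardPlacement_of_adj hc'.2.1.symm⟩
  have hrD : r ∉ D := fun h => hrA ⟨h, hrx⟩
  by_cases hA : ∃ y ∈ D \ {x}, G.Adj y r
  · obtain ⟨y, hy, hyr⟩ := hA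
    have hcs' : c ∉ Function.update s y r '' (D \ {x}) := by
      rintro ⟨z, hz, hzc⟩
      rw [Function.update_apply] at hzc
      split_ifs at hzc
      exacts [hcr hzc.symm, hcs ⟨z, hz, hzc⟩]
    exact ⟨_, ⟨c, _, hs.update hyr hrD hrs, hc, hcs', rfl⟩, ⟨some (.inr ⟨y, hy⟩), by
      simp [guardPlacement]⟩, isLabelledMove_guardPlacement_update hs hy hyr⟩
  push Not at hA
  have hrepn := mem_epnSet_of_forall_not_adj hD hrD hA
  obtain rfl : c = x := hc.resolve_right fun hc' => hcr (hepn hc' hrepn)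
  exact ⟨_, ⟨r, s, hs, Or.inr hrepn, hrs, rfl⟩, ⟨none, rfl⟩,
    isLabelledMove_guardPlacement_of_adj hrepn.2.1⟩

lemma canDefendAllMove_two_mul_ncard_sub_one [Finite V] (hD : IsDomSet G D) (hx : x ∈ D)
    (hepn : (epnSet G D x).Subsingleton) (hs : IsOutsideMatching G D (D \ {x}) s) :
    CanDefendAllMove G (2 * D.ncard - 1) := by
  have h := canDefendAllMove_of_placements (guardPlacements G D x)
    ⟨_, x, s, hs, Or.inl rfl, hs.notMem_image hx, rfl⟩
    (by rintro _ ⟨c, s, hs, hc, hcs, rfl⟩; exact guardPlacement_injective hs hc hcs)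
    (by rintro _ ⟨c, s, -, hc, -, rfl⟩; exact isDomSet_range_guardPlacement hD hepn hc)
    fun P hP r hr => exists_guardPlacement_response hD hepn hP hr
  simp only [Finite.card_option, Nat.card_sum, Nat.card_coe_set_eq,
    Set.ncard_sdiff_singleton_of_mem hx] at h
  have := (Set.ncard_pos (Set.toFinite D)).2 ⟨x, hx⟩
  convert h using 2
  omega

end Strategy

lemma mEternalDomNum_lt_two_mul_domNum [Finite V] (hG : G.Connected) (hD : IsDomSet G D)
    (hmin : D.ncard = domNum G) {x : V} (hx : x ∈ D) (hepn : (epnSet G D x).Subsingleton) :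
    mEternalDomNum G < 2 * domNum G := by
  obtain ⟨s, hs⟩ := exists_isOutsideMatching hD hmin Set.sdiff_subset fun y hy =>
    have := nontrivial_of_ne y x hy.2
    hG.preconnected.exists_adj_of_nontrivial y
  have hle := mEternalDomNum_le (canDefendAllMove_two_mul_ncard_sub_one hD hx hepn hs)
  have := (Set.ncard_pos (Set.toFinite D)).2 ⟨x, hx⟩
  omega

end ED

open ED in
/-- If `T` is a tree with `γ_m^∞(T) = 2γ(T)` and `D` is a minimum dominating set of
`T`, then every `x ∈ D` has at least two external private neighbors. -/
theorem stmt_11 {V : Type} [Fintype V] (T : SimpleGraph V) (hT : T.IsTree)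
    (h : mEternalDomNum T = 2 * domNum T) (D : Set V)
    (hD : IsDomSet T D) (hmin : D.ncard = domNum T) :
    ∀ x ∈ D, 2 ≤ (epnSet T D x).ncard := by
  intro x hx
  by_contra! hlt
  have hepn : (epnSet T D x).Subsingleton := Set.ncard_le_one_iff_subsingleton.1 (by omega)
  exact (mEternalDomNum_lt_two_mul_domNum hT.connected hD hmin hx hepn).ne h
end

section
/- If T is a tree with γ_m^∞(T) = 2γ(T), then no leaf of T belongs to any minimum dominating set of T. -/
open scoped Classical

/-!
A dominating set `D` splits the vertices into stars, each vertex joining the star of a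
dominator adjacent to it. The all-guards-move game can be played independently inside each
star, with guards that never leave it: one guard defends a star with at most two vertices
(a clique), two guards, on the center and on a leaf, defend any larger star. Hence
`γ_m^∞ ≤ 2|D|`, strictly as soon as some star has at most two vertices, as the star of a leaf
in `D` does.
-/

namespace ED

variable {V : Type}

def DefendsWithin (G : SimpleGraph V) (S : Set V) (k : ℕ) : Prop :=
  ∃ F : Set (Set V), F.Nonempty ∧
    (∀ D ∈ F, D ⊆ S ∧ D.ncard = k ∧ ∀ w ∈ S, w ∉ D → ∃ u ∈ D, G.Adj u w) ∧
    ∀ D ∈ F, ∀ r ∈ S, r ∉ D → ∃ D' ∈ F, r ∈ D' ∧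
      ∃ f : V → V, Set.BijOn f D D' ∧ ∀ v ∈ D, f v = v ∨ G.Adj v (f v)

variable {G : SimpleGraph V}

section Fibers

variable {ι : Type} {a : V → ι} {C : ι → Set V}

theorem mem_iUnion_iff_of_subset_fiber (hC : ∀ i, C i ⊆ a ⁻¹' {i}) {x : V} :
    x ∈ ⋃ i, C i ↔ x ∈ C (a x) := by
  refine ⟨fun hx => ?_, fun hx => Set.mem_iUnion_of_mem _ hx⟩
  obtain ⟨i, hi⟩ := Set.mem_iUnion.mp hx
  rwa [show a x = i from hC i hi]

theorem ncard_iUnion_of_subset_fiber [Finite V] [Fintype ι] (hC : ∀ i, C i ⊆ a ⁻¹' {i}) :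
    (⋃ i, C i).ncard = ∑ i, (C i).ncard := by
  rw [Set.ncard_iUnion_of_finite (fun _ => Set.toFinite _), finsum_eq_sum_of_fintype]
  intro i j hij
  exact ((Set.disjoint_singleton.mpr hij).preimage a).mono (hC i) (hC j)

theorem bijOn_iUnion_update [DecidableEq ι] (hC : ∀ i, C i ⊆ a ⁻¹' {i}) {i : ι} {C' : Set V}
    (hC' : C' ⊆ a ⁻¹' {i}) {f : V → V} (hf : Set.BijOn f (C i) C') :
    Set.BijOn (fun x => if a x = i then f x else x) (⋃ j, C j)
      (⋃ j, Function.update C i C' j) := by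
  have hU : ∀ j, Function.update C i C' j ⊆ a ⁻¹' {j} := by
    intro j
    rcases eq_or_ne j i with rfl | hj
    · simpa using hC'
    · simpa [hj] using hC j
  have hCi : ∀ {x}, x ∈ C i → a x = i := fun hx => hC i hx
  have hfi : ∀ {x}, x ∈ C i → a (f x) = i := fun hx => hC' (hf.mapsTo hx)
  simp only [Set.BijOn, Set.MapsTo, Set.InjOn, Set.SurjOn, Set.subset_def, Set.mem_image,
    mem_iUnion_iff_of_subset_fiber hC, mem_iUnion_iff_of_subset_fiber hU]
  refine ⟨fun x hx => ?_, fun x hx y hy hxy => ?_, fun y hy => ?_⟩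
  · split_ifs with hxi
    · subst hxi
      simpa [hfi hx] using hf.mapsTo hx
    · simpa [hxi] using hx
  · by_cases hxi : a x = i <;> by_cases hyi : a y = i <;> simp only [hxi, hyi, if_true,
      if_false] at hxy
    · exact hf.injOn (hxi ▸ hx) (hyi ▸ hy) hxy
    · exact absurd (hxy ▸ hfi (hxi ▸ hx)) hyi
    · exact absurd (hxy ▸ hfi (hyi ▸ hy)) hxi
    · exact hxy
  · by_cases hyi : a y = i
    · obtain ⟨x, hx, rfl⟩ := hf.surjOn (by simpa [hyi] using hy)
      exact ⟨x, by rwa [hCi hx], by simp [hCi hx]⟩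
    · exact ⟨y, by simpa [hyi] using hy, by simp [hyi]⟩

theorem canDefendAllMove_of_defendsWithin_fibers [Finite V] [Fintype ι] (a : V → ι) (k : ι → ℕ)
    (h : ∀ i, DefendsWithin G (a ⁻¹' {i}) (k i)) : CanDefendAllMove G (∑ i, k i) := by
  classical
  choose F hne hF hresp using h
  refine ⟨{D | ∃ C : ι → Set V, (∀ i, C i ∈ F i) ∧ D = ⋃ i, C i},
    ⟨_, fun i => (hne i).some, fun i => (hne i).some_mem, rfl⟩, ?_, ?_⟩
  · rintro _ ⟨C, hC, rfl⟩
    have hsub : ∀ i, C i ⊆ a ⁻¹' {i} := fun i => (hF i _ (hC i)).1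
    refine ⟨fun w hw => ?_, ?_⟩
    · rw [mem_iUnion_iff_of_subset_fiber hsub] at hw
      obtain ⟨u, hu, huw⟩ := (hF _ _ (hC (a w))).2.2 w rfl hw
      exact ⟨u, Set.mem_iUnion_of_mem _ hu, huw⟩
    · rw [ncard_iUnion_of_subset_fiber hsub]
      exact Finset.sum_congr rfl fun i _ => (hF i _ (hC i)).2.1
  · rintro _ ⟨C, hC, rfl⟩ r hr
    have hsub : ∀ i, C i ⊆ a ⁻¹' {i} := fun i => (hF i _ (hC i)).1
    rw [mem_iUnion_iff_of_subset_fiber hsub] at hr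
    obtain ⟨C', hC', hrC', f, hf, hmove⟩ := hresp _ _ (hC (a r)) r rfl hr
    refine ⟨_, ⟨Function.update C (a r) C', fun j => ?_, rfl⟩,
      Set.mem_iUnion_of_mem (a r) (by simpa using hrC'), _,
      bijOn_iUnion_update hsub (hF _ _ hC').1 hf, fun x hx => ?_⟩
    · rcases eq_or_ne j (a r) with rfl | hj
      · simpa using hC'
      · simpa [hj] using hC j
    · rw [mem_iUnion_iff_of_subset_fiber hsub] at hx
      split_ifs with hxr
      · exact hmove x (hxr ▸ hx)
      · exact Or.inl rfl

end Fibers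

section Parts

variable {S : Set V}

theorem defendsWithin_one_of_isClique (hS : G.IsClique S) (hne : S.Nonempty) :
    DefendsWithin G S 1 := by
  refine ⟨{D | ∃ x ∈ S, D = {x}}, ⟨_, hne.some, hne.some_mem, rfl⟩, ?_, ?_⟩
  · rintro _ ⟨x, hx, rfl⟩
    refine ⟨Set.singleton_subset_iff.mpr hx, Set.ncard_singleton x, fun w hw hwx => ?_⟩
    exact ⟨x, rfl, hS hx hw (Ne.symm hwx)⟩
  · rintro _ ⟨x, hx, rfl⟩ r hr hrx
    refine ⟨{r}, ⟨r, hr, rfl⟩, rfl, fun _ => r, ?_, fun v hv => ?_⟩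
    · exact Set.bijOn_singleton.mpr rfl
    · rw [Set.mem_singleton_iff.mp hv]
      exact Or.inr (hS hx hr (Ne.symm hrx))

/-- Guards on the center and on one leaf: on an attack the center guard moves to the attacked
leaf and the leaf guard to the center. -/
theorem defendsWithin_two_of_star {u x : V} (hu : u ∈ S) (hstar : ∀ w ∈ S, w ≠ u → G.Adj u w)
    (hx : x ∈ S) (hxu : x ≠ u) : DefendsWithin G S 2 := by
  refine ⟨{D | ∃ l ∈ S, l ≠ u ∧ D = {u, l}}, ⟨_, x, hx, hxu, rfl⟩, ?_, ?_⟩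
  · rintro _ ⟨l, hl, hlu, rfl⟩
    refine ⟨Set.insert_subset hu (Set.singleton_subset_iff.mpr hl),
      Set.ncard_pair hlu.symm, fun w hw hwD => ⟨u, Set.mem_insert _ _, hstar w hw ?_⟩⟩
    rintro rfl
    exact hwD (Set.mem_insert _ _)
  · rintro _ ⟨l, hl, hlu, rfl⟩ r hr hrD
    have hru : r ≠ u := fun h => hrD (h ▸ Set.mem_insert _ _)
    refine ⟨{u, r}, ⟨r, hr, hru, rfl⟩, Set.mem_insert_of_mem _ rfl,
      fun y => if y = u then r else u, ⟨?_, ?_, ?_⟩, ?_⟩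
    · rintro y (rfl | rfl)
      · simp
      · simp [hlu]
    · rintro y (rfl | rfl) z (rfl | rfl) h <;> simp_all
    · rintro y (rfl | rfl)
      · exact ⟨l, Set.mem_insert_of_mem _ rfl, by simp [hlu]⟩
      · exact ⟨u, Set.mem_insert _ _, by simp⟩
    · rintro y (rfl | rfl)
      · simpa using Or.inr (hstar r hr hru)
      · simpa [hlu] using Or.inr (hstar y hl hlu).symm

theorem isClique_of_star_of_ncard_le_two [Finite V] {u : V} (hu : u ∈ S)
    (hstar : ∀ w ∈ S, w ≠ u → G.Adj u w) (hS : S.ncard ≤ 2) : G.IsClique S := by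
  intro w hw z hz hwz
  by_cases hwu : w = u
  · exact hwu ▸ hstar z hz (hwu ▸ hwz.symm)
  by_cases hzu : z = u
  · exact hzu ▸ (hstar w hw hwu).symm
  have h3 : ({u, w, z} : Set V).ncard = 3 :=
    Set.ncard_eq_three.mpr ⟨u, w, z, Ne.symm hwu, Ne.symm hzu, hwz, rfl⟩
  have := Set.ncard_le_ncard (Set.insert_subset hu (Set.insert_subset hw
    (Set.singleton_subset_iff.mpr hz))) (Set.toFinite S)
  omega

theorem defendsWithin_star [Finite V] {u : V} (hu : u ∈ S) (hstar : ∀ w ∈ S, w ≠ u → G.Adj u w) :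
    DefendsWithin G S (if S.ncard ≤ 2 then 1 else 2) := by
  split_ifs with hS
  · exact defendsWithin_one_of_isClique (isClique_of_star_of_ncard_le_two hu hstar hS) ⟨u, hu⟩
  · obtain ⟨x, hx, hxu⟩ := Set.exists_ne_of_one_lt_ncard (s := S) (by omega) u
    exact defendsWithin_two_of_star hu hstar hx hxu

end Parts

theorem IsDomSet.exists_retraction {D : Set V} (hD : IsDomSet G D) :
    ∃ a : V → D, (∀ u : D, a u = u) ∧ ∀ w, (a w : V) = w ∨ G.Adj (a w) w := by
  refine ⟨fun w => if hw : w ∈ D then ⟨w, hw⟩ else ⟨_, (hD w hw).choose_spec.1⟩, ?_, fun w => ?_⟩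
  · rintro ⟨u, hu⟩
    simp [hu]
  · by_cases hw : w ∈ D
    · simp [hw]
    · simp [hw, (hD w hw).choose_spec.2]

theorem mEternalDomNum_lt_two_mul_ncard [Finite V] {D : Set V} (hD : IsDomSet G D) {v : V}
    (hv : v ∈ D) (hleaf : IsLeaf G v) : mEternalDomNum G < 2 * D.ncard := by
  have := Fintype.ofFinite D
  obtain ⟨a, ha_self, ha_adj⟩ := hD.exists_retraction
  have hstar : ∀ u : D, ∀ w ∈ a ⁻¹' {u}, w ≠ u → G.Adj u w := by
    rintro u w rfl hw
    exact (ha_adj w).resolve_left hw.symm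
  set k : D → ℕ := fun u => if (a ⁻¹' {u}).ncard ≤ 2 then 1 else 2
  have hdefend : CanDefendAllMove G (∑ u, k u) :=
    canDefendAllMove_of_defendsWithin_fibers a k fun u => defendsWithin_star (ha_self u) (hstar u)
  have hkv : k ⟨v, hv⟩ = 1 := by
    refine if_pos ?_
    have hsub : a ⁻¹' {⟨v, hv⟩} ⊆ insert v (G.neighborSet v) := fun w hw => by
      by_cases hwv : w = v
      · exact Or.inl hwv
      · exact Or.inr (hstar _ w hw hwv)
    calc (a ⁻¹' {⟨v, hv⟩}).ncard ≤ (insert v (G.neighborSet v)).ncard :=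
          Set.ncard_le_ncard hsub (Set.toFinite _)
      _ ≤ (G.neighborSet v).ncard + 1 := Set.ncard_insert_le _ _
      _ = 2 := by rw [hleaf]
  calc mEternalDomNum G ≤ ∑ u, k u := Nat.sInf_le hdefend
    _ < ∑ _u : D, 2 := by
      refine Finset.sum_lt_sum (fun u _ => ?_) ⟨⟨v, hv⟩, Finset.mem_univ _, by omega⟩
      simp only [k]
      split_ifs <;> omega
    _ = 2 * D.ncard := by
      rw [Finset.sum_const, Finset.card_univ, Fintype.card_eq_nat_card, Nat.card_coe_set_eq,
        smul_eq_mul, mul_comm]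

end ED

open ED in
theorem stmt_12_general {V : Type} [Fintype V] (T : SimpleGraph V)
    (h : mEternalDomNum T = 2 * domNum T) :
    ∀ D : Set V, IsDomSet T D → D.ncard = domNum T → ∀ v ∈ D, ¬ IsLeaf T v := by
  intro D hD hcard v hv hleaf
  have := mEternalDomNum_lt_two_mul_ncard hD hv hleaf
  omega

open ED in
/-- If `T` is a tree with `γ_m^∞(T) = 2γ(T)`, then no leaf of `T` belongs to any
minimum dominating set of `T`. -/
theorem stmt_12 {V : Type} [Fintype V] (T : SimpleGraph V) (hT : T.IsTree)
    (h : mEternalDomNum T = 2 * domNum T) :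
    ∀ D : Set V, IsDomSet T D → D.ncard = domNum T → ∀ v ∈ D, ¬ IsLeaf T v :=
  stmt_12_general T h
end

section
/- Let T be a tree with γ_m^∞(T) = 2γ(T). Then every dominating set partition of T with respect to a minimum dominating set D is fat, i.e., each part has at least three vertices. -/
/-!
Each part of the partition is a star and is defended on its own. A star with at most two
vertices is a clique, so a single guard suffices: it moves onto every attacked vertex. A larger
star needs only two guards, one at the centre and one roaming on a leaf: when a leaf is
attacked, the roaming guard steps to the centre and the central guard to the attacked leaf.
Hence `γ_m^∞(T)` is at most the number of parts plus the number of parts with at least three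
vertices, which is less than `2 |P| = 2 γ(T)` as soon as some part is small.
-/

open scoped Classical

namespace ED

variable {V : Type}

/-- `S` induces in `G` a star centered at `c`. -/
def IsStarOn (G : SimpleGraph V) (S : Set V) (c : V) : Prop :=
  c ∈ S ∧ (∀ v ∈ S, v ≠ c → G.Adj c v) ∧
    ∀ u ∈ S, ∀ v ∈ S, G.Adj u v → u = c ∨ v = c

/-- A dominating set partition of `G` with respect to a minimum dominating set `D`:
a neo-colonization with `γ(G)` parts, each inducing a star centered at a vertex
of `D`. -/
def IsDomSetPartition (G : SimpleGraph V) (D : Set V) (P : Finset (Set V)) : Prop :=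
  IsNeoColonization G P ∧ P.card = domNum G ∧
    ∀ S ∈ P, ∃ c ∈ D, IsStarOn G S c

end ED

namespace ED

variable {V : Type} {G : SimpleGraph V} {S : Set V} {c u r v : V}

-- `encard` rather than `ncard`, so that an infinite star also counts as large.
noncomputable def starGuards (S : Set V) (c u : V) : Set V :=
  if 3 ≤ S.encard then {c, u} else {u}

def IsRoamingPos (S : Set V) (c u : V) : Prop :=
  u ∈ S ∧ (3 ≤ S.encard → u ≠ c)

lemma three_le_encard_of_ne {a b d : V} (ha : a ∈ S) (hb : b ∈ S) (hd : d ∈ S)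
    (hab : a ≠ b) (had : a ≠ d) (hbd : b ≠ d) : 3 ≤ S.encard := by
  have hsub : ({a, b, d} : Set V) ⊆ S := by
    simp only [Set.insert_subset_iff, Set.singleton_subset_iff]; exact ⟨ha, hb, hd⟩
  have hcard : ({a, b, d} : Set V).encard = 3 := by
    rw [Set.encard_insert_of_notMem (by simp [hab, had]), Set.encard_pair hbd]; rfl
  exact hcard ▸ Set.encard_le_encard hsub

lemma IsStarOn.adj_of_encard_lt (hS : IsStarOn G S c) (hsmall : S.encard < 3)
    (hu : u ∈ S) (hv : v ∈ S) (huv : u ≠ v) : G.Adj u v := by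
  by_cases huc : u = c
  · exact huc ▸ hS.2.1 v hv (huc ▸ huv).symm
  by_cases hvc : v = c
  · exact (hvc ▸ hS.2.1 u hu (hvc ▸ huv)).symm
  exact absurd (three_le_encard_of_ne hu hv hS.1 huv huc hvc) (not_le.2 hsmall)

lemma IsStarOn.exists_isRoamingPos (hS : IsStarOn G S c) : ∃ u, IsRoamingPos S c u := by
  by_cases hlarge : 3 ≤ S.encard
  · obtain ⟨u, hu, huc⟩ := Set.exists_ne_of_one_lt_encard (lt_of_lt_of_le (by norm_num) hlarge) c
    exact ⟨u, hu, fun _ ↦ huc⟩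
  · exact ⟨c, hS.1, fun h ↦ absurd h hlarge⟩

lemma mem_starGuards_self : u ∈ starGuards S c u := by
  unfold starGuards
  split_ifs
  · exact Set.mem_insert_of_mem c rfl
  · exact rfl

lemma starGuards_finite : (starGuards S c u).Finite := by
  unfold starGuards
  split_ifs
  · exact Set.toFinite _
  · exact Set.toFinite _

lemma starGuards_subset (hc : c ∈ S) (hu : IsRoamingPos S c u) : starGuards S c u ⊆ S := by
  unfold starGuards
  split_ifs
  · exact Set.pair_subset hc hu.1
  · exact Set.singleton_subset_iff.2 hu.1

lemma ncard_starGuards (hu : IsRoamingPos S c u) :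
    (starGuards S c u).ncard = if 3 ≤ S.encard then 2 else 1 := by
  unfold starGuards
  split_ifs with hlarge
  · exact Set.ncard_pair (hu.2 hlarge).symm
  · exact Set.ncard_singleton u

lemma IsStarOn.exists_adj_starGuards (hS : IsStarOn G S c) (hu : IsRoamingPos S c u)
    (hv : v ∈ S) (hvu : v ∉ starGuards S c u) : ∃ w ∈ starGuards S c u, G.Adj w v := by
  unfold starGuards at hvu ⊢
  split_ifs at hvu ⊢ with hlarge
  · exact ⟨c, Set.mem_insert c _, hS.2.1 v hv fun h ↦ hvu (h ▸ Set.mem_insert v _)⟩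
  · exact ⟨u, rfl, hS.adj_of_encard_lt (not_le.1 hlarge) hu.1 hv fun h ↦ hvu (h ▸ rfl)⟩

lemma isRoamingPos_of_notMem_starGuards (hr : r ∈ S) (hru : r ∉ starGuards S c u) :
    IsRoamingPos S c r := by
  refine ⟨hr, fun hlarge hrc ↦ hru ?_⟩
  rw [starGuards, if_pos hlarge, hrc]
  exact Set.mem_insert c _

lemma IsStarOn.exists_perm_starGuards (hS : IsStarOn G S c) (hu : IsRoamingPos S c u)
    (hr : r ∈ S) (hru : r ∉ starGuards S c u) :
    ∃ σ : Equiv.Perm V, (∀ x ∉ S, σ x = x) ∧ σ '' starGuards S c u = starGuards S c r ∧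
      ∀ w ∈ starGuards S c u, σ w = w ∨ G.Adj w (σ w) := by
  unfold starGuards at hru ⊢
  split_ifs at hru ⊢ with hlarge
  · have huc := hu.2 hlarge
    have hrc : r ≠ c := fun h ↦ hru (h ▸ Set.mem_insert r _)
    have hr_ne_u : r ≠ u := fun h ↦ hru (h ▸ Set.mem_insert_of_mem c rfl)
    have hσc : (Equiv.swap u c * Equiv.swap c r) c = r := by
      simp [Equiv.swap_apply_of_ne_of_ne hr_ne_u hrc]
    have hσu : (Equiv.swap u c * Equiv.swap c r) u = c := by
      simp [Equiv.swap_apply_of_ne_of_ne huc (Ne.symm hr_ne_u)]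
    refine ⟨Equiv.swap u c * Equiv.swap c r, fun x hx ↦ ?_, ?_, ?_⟩
    · have hne : ∀ y ∈ S, x ≠ y := fun y hy h ↦ hx (h ▸ hy)
      rw [Equiv.Perm.mul_apply, Equiv.swap_apply_of_ne_of_ne (hne c hS.1) (hne r hr),
        Equiv.swap_apply_of_ne_of_ne (hne u hu.1) (hne c hS.1)]
    · rw [Set.image_pair, hσc, hσu, Set.pair_comm]
    · rintro w (hw | hw) <;> rw [Set.mem_singleton_iff.1 hw] <;> right
      · exact hσc.symm ▸ hS.2.1 r hr hrc
      · exact hσu.symm ▸ (hS.2.1 u hu.1 huc).symm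
  · have hr_ne_u : r ≠ u := fun h ↦ hru (h ▸ rfl)
    refine ⟨Equiv.swap u r, fun x hx ↦ ?_, ?_, ?_⟩
    · exact Equiv.swap_apply_of_ne_of_ne (fun h ↦ hx (h ▸ hu.1)) (fun h ↦ hx (h ▸ hr))
    · rw [Set.image_singleton, Equiv.swap_apply_left]
    · rintro w hw
      rw [Set.mem_singleton_iff.1 hw, Equiv.swap_apply_left]
      exact Or.inr (hS.adj_of_encard_lt (not_le.1 hlarge) hu.1 hr hr_ne_u.symm)

section Partition

variable {P : Finset (Set V)} {c g : Set V → V}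

noncomputable def guardConf (P : Finset (Set V)) (c g : Set V → V) : Set V :=
  ⋃ S ∈ P, starGuards S (c S) (g S)

lemma eq_of_mem_of_mem_of_existsUnique (hP : ∀ v, ∃! S, S ∈ P ∧ v ∈ S) {S S' : Set V}
    (hS : S ∈ P) (hS' : S' ∈ P) (hv : v ∈ S) (hv' : v ∈ S') : S = S' :=
  (hP v).unique ⟨hS, hv⟩ ⟨hS', hv'⟩

variable (hP : ∀ v, ∃! S, S ∈ P ∧ v ∈ S) (hc : ∀ S ∈ P, IsStarOn G S (c S))
include hP hc

lemma ncard_guardConf (hg : ∀ S ∈ P, IsRoamingPos S (c S) (g S)) :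
    (guardConf P c g).ncard = ∑ S ∈ P, if 3 ≤ S.encard then 2 else 1 := by
  have hdisj : (P : Set (Set V)).PairwiseDisjoint fun S ↦ starGuards S (c S) (g S) :=
    fun S hS S' hS' hne ↦ Set.disjoint_left.2 fun v hv hv' ↦ hne <|
      eq_of_mem_of_mem_of_existsUnique hP hS hS' (starGuards_subset (hc S hS).1 (hg S hS) hv)
        (starGuards_subset (hc S' hS').1 (hg S' hS') hv')
  have := P.finite_toSet.ncard_biUnion (fun _ _ ↦ starGuards_finite) hdisj
  rw [finsum_mem_coe_finset] at this
  simp only [Finset.mem_coe] at this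
  rw [guardConf, this]
  exact Finset.sum_congr rfl fun S hS ↦ ncard_starGuards (hg S hS)

lemma isDomSet_guardConf (hg : ∀ S ∈ P, IsRoamingPos S (c S) (g S)) :
    IsDomSet G (guardConf P c g) := by
  intro v hv
  obtain ⟨S, ⟨hS, hvS⟩, -⟩ := hP v
  obtain ⟨w, hw, hwv⟩ := (hc S hS).exists_adj_starGuards (hg S hS) hvS
    fun h ↦ hv (Set.mem_iUnion₂.2 ⟨S, hS, h⟩)
  exact ⟨w, Set.mem_iUnion₂.2 ⟨S, hS, hw⟩, hwv⟩

lemma exists_move_guardConf (hg : ∀ S ∈ P, IsRoamingPos S (c S) (g S))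
    (hr : r ∉ guardConf P c g) :
    ∃ g', (∀ S ∈ P, IsRoamingPos S (c S) (g' S)) ∧ r ∈ guardConf P c g' ∧
      ∃ f : V → V, Set.BijOn f (guardConf P c g) (guardConf P c g') ∧
        ∀ v ∈ guardConf P c g, f v = v ∨ G.Adj v (f v) := by
  obtain ⟨Sr, ⟨hSr, hrS⟩, -⟩ := hP r
  have hr' : r ∉ starGuards Sr (c Sr) (g Sr) := fun h ↦ hr (Set.mem_iUnion₂.2 ⟨Sr, hSr, h⟩)
  obtain ⟨σ, hσ_fix, hσ_image, hσ_adj⟩ :=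
    (hc Sr hSr).exists_perm_starGuards (hg Sr hSr) hrS hr'
  set g' := Function.update g Sr r
  have hg'_self : g' Sr = r := Function.update_self Sr r g
  have hg'_ne : ∀ S ≠ Sr, g' S = g S := fun S h ↦ Function.update_of_ne h r g
  have hσ_fix_ne : ∀ S ∈ P, S ≠ Sr → ∀ x ∈ starGuards S (c S) (g S), σ x = x :=
    fun S hS hne x hx ↦ hσ_fix x fun hxSr ↦ hne <|
      eq_of_mem_of_mem_of_existsUnique hP hS hSr (starGuards_subset (hc S hS).1 (hg S hS) hx) hxSr
  have himage : σ '' guardConf P c g = guardConf P c g' := by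
    rw [guardConf, Set.image_iUnion₂]
    refine Set.iUnion₂_congr fun S hS ↦ ?_
    by_cases hS_eq : S = Sr
    · rw [hS_eq, hσ_image, hg'_self]
    · rw [hg'_ne S hS_eq]
      exact Set.EqOn.image_eq_self (hσ_fix_ne S hS hS_eq)
  refine ⟨g', fun S hS ↦ ?_, Set.mem_iUnion₂.2 ⟨Sr, hSr, hg'_self ▸ mem_starGuards_self⟩, σ,
    himage ▸ σ.injective.injOn.bijOn_image, fun v hv ↦ ?_⟩
  · by_cases hS_eq : S = Sr
    · rw [hS_eq, hg'_self]
      exact isRoamingPos_of_notMem_starGuards hrS hr'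
    · rw [hg'_ne S hS_eq]
      exact hg S hS
  · obtain ⟨S, hS, hvS⟩ := Set.mem_iUnion₂.1 hv
    by_cases hS_eq : S = Sr
    · exact hσ_adj v (hS_eq ▸ hvS)
    · exact Or.inl (hσ_fix_ne S hS hS_eq v hvS)

theorem canDefendAllMove_of_isStarOn :
    CanDefendAllMove G (∑ S ∈ P, if 3 ≤ S.encard then 2 else 1) := by
  -- `V` may be empty, so the initial positions are chosen with `c S` as the default.
  have hg₀ : ∀ S ∈ P, IsRoamingPos S (c S) (@Classical.epsilon V ⟨c S⟩ (IsRoamingPos S (c S))) :=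
    fun S hS ↦ Classical.epsilon_spec (hc S hS).exists_isRoamingPos
  refine ⟨{C | ∃ g, (∀ S ∈ P, IsRoamingPos S (c S) (g S)) ∧ C = guardConf P c g},
    ⟨_, _, hg₀, rfl⟩, ?_, ?_⟩
  · rintro _ ⟨g, hg, rfl⟩
    exact ⟨isDomSet_guardConf hP hc hg, ncard_guardConf hP hc hg⟩
  · rintro _ ⟨g, hg, rfl⟩ r hr
    obtain ⟨g', hg', hr', f, hf, hadj⟩ := exists_move_guardConf hP hc hg hr
    exact ⟨_, ⟨g', hg', rfl⟩, hr', f, hf, hadj⟩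

end Partition

end ED

open ED in
theorem stmt_14_general {V : Type} [Fintype V] (T : SimpleGraph V)
    (h : mEternalDomNum T = 2 * domNum T) (D : Set V)
    (P : Finset (Set V)) (hP : IsDomSetPartition T D P) :
    ∀ S ∈ P, 3 ≤ S.ncard := by
  intro S₀ hS₀
  by_contra hsmall
  obtain ⟨⟨-, hpart⟩, hcard, hstar⟩ := hP
  have : Nonempty V := let ⟨c, _⟩ := hstar S₀ hS₀; ⟨c⟩
  choose! c _ hc using hstar
  have hS₀_small : ¬ 3 ≤ S₀.encard := by
    rw [← S₀.toFinite.cast_ncard_eq]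
    exact_mod_cast hsmall
  have hfewer : ∑ S ∈ P, (if 3 ≤ S.encard then 2 else 1) < 2 * domNum T := by
    rw [← hcard, mul_comm, ← smul_eq_mul, ← Finset.sum_const]
    exact Finset.sum_lt_sum (fun S _ ↦ by split_ifs <;> omega)
      ⟨S₀, hS₀, by rw [if_neg hS₀_small]; omega⟩
  have : mEternalDomNum T ≤ _ := Nat.sInf_le (canDefendAllMove_of_isStarOn hpart hc)
  omega

open ED in
/-- If `T` is a tree with `γ_m^∞(T) = 2γ(T)`, then every dominating set partition of
`T` with respect to a minimum dominating set `D` is fat: each part has at least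
three vertices. -/
theorem stmt_14 {V : Type} [Fintype V] (T : SimpleGraph V) (hT : T.IsTree)
    (h : mEternalDomNum T = 2 * domNum T) (D : Set V)
    (hD : IsDomSet T D) (hmin : D.ncard = domNum T)
    (P : Finset (Set V)) (hP : IsDomSetPartition T D P) :
    ∀ S ∈ P, 3 ≤ S.ncard :=
  stmt_14_general T h D P hP
end

section
/- For any graph G, γ_m^∞(G) ≤ β(G), where β(G) is the independence number. -/
open scoped Classical

/-!
The guards maintain Hall's condition `|T| ≤ |N[T] ∩ D|` for every independent set `T`, i.e. every
independent set can be matched into the guard set `D` along closed neighbourhoods. A maximum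
independent set `M` satisfies it, since exchanging `N[T] ∩ M` for `T` in `M` gives another
independent set, and applied to singletons the condition says that `D` dominates. When `r` is
attacked, Hall's theorem moves the guards in one step onto a new configuration containing `r`:
a maximum independent set through `r` if there is one, and otherwise `M - m + r`, where `M` is a
maximum independent set with as few neighbours of `r` as possible and `m` is a neighbour of `r`
in `M` chosen to lie in every tight subset of `M` whose neighbourhood holds all guards next to
`r`. Tight sets are closed under intersection by submodularity, so such an `m` exists.
-/

namespace ED

variable {V : Type} {G : SimpleGraph V}

variable (G) in
def closedNbhd (T : Set V) : Set V :=
  {v | ∃ t ∈ T, v = t ∨ G.Adj t v}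

theorem subset_closedNbhd (T : Set V) : T ⊆ closedNbhd G T :=
  fun t ht => ⟨t, ht, Or.inl rfl⟩

theorem mem_closedNbhd_singleton {u v : V} : v ∈ closedNbhd G {u} ↔ v = u ∨ G.Adj u v := by
  simp [closedNbhd]

theorem closedNbhd_mono {S T : Set V} (h : S ⊆ T) : closedNbhd G S ⊆ closedNbhd G T :=
  fun _ ⟨t, ht, hv⟩ => ⟨t, h ht, hv⟩

theorem closedNbhd_union (S T : Set V) :
    closedNbhd G (S ∪ T) = closedNbhd G S ∪ closedNbhd G T := by
  ext v
  simp only [closedNbhd, Set.mem_union, Set.mem_ofPred_eq]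
  grind

theorem isIndepSet_union {S T : Set V} (hS : G.IsIndepSet S) (hT : G.IsIndepSet T)
    (hST : ∀ s ∈ S, ∀ t ∈ T, ¬ G.Adj s t) : G.IsIndepSet (S ∪ T) :=
  Set.pairwise_union.2 ⟨hS, hT, fun s hs t ht _ => ⟨hST s hs t ht, fun h => hST s hs t ht h.symm⟩⟩

theorem isIndepSet_insert {S : Set V} {r : V} (hS : G.IsIndepSet S)
    (hr : ∀ s ∈ S, ¬ G.Adj r s) : G.IsIndepSet (insert r S) :=
  hS.insert fun s hs _ => ⟨hr s hs, fun h => hr s hs h.symm⟩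

theorem isIndepSet_sdiff_closedNbhd_union {M T : Set V} (hM : G.IsIndepSet M)
    (hT : G.IsIndepSet T) : G.IsIndepSet (M \ closedNbhd G T ∪ T) :=
  isIndepSet_union (hM.mono Set.sdiff_subset) hT fun _ hs t ht hadj =>
    hs.2 ⟨t, ht, Or.inr hadj.symm⟩

variable (G) in
def IsIndepHall (D : Set V) : Prop :=
  ∀ T, G.IsIndepSet T → T.ncard ≤ (closedNbhd G T ∩ D).ncard

theorem IsIndepHall.isDomSet {D : Set V} (hD : IsIndepHall G D) : IsDomSet G D := by
  intro v hv
  have h := hD {v} (Set.pairwise_singleton v _)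
  rw [Set.ncard_singleton] at h
  obtain ⟨u, hu, huD⟩ := Set.nonempty_of_ncard_ne_zero (by omega : (closedNbhd G {v} ∩ D).ncard ≠ 0)
  rcases mem_closedNbhd_singleton.1 hu with rfl | hadj
  · exact absurd huD hv
  · exact ⟨u, huD, hadj.symm⟩

section Finite

variable [Finite V]

variable (G) in
theorem bddAbove_ncard_isIndepSet : BddAbove {n | ∃ S : Set V, G.IsIndepSet S ∧ S.ncard = n} :=
  ⟨Nat.card V, by rintro n ⟨S, -, rfl⟩; exact Set.ncard_le_card S⟩

theorem ncard_le_indepNum_of_isIndepSet {S : Set V} (hS : G.IsIndepSet S) :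
    S.ncard ≤ indepNum G :=
  le_csSup (bddAbove_ncard_isIndepSet G) ⟨S, hS, rfl⟩

variable (G) in
theorem exists_isIndepSet_ncard_eq_indepNum : ∃ M : Set V, G.IsIndepSet M ∧ M.ncard = indepNum G :=
  Nat.sSup_mem (s := {n | ∃ S : Set V, G.IsIndepSet S ∧ S.ncard = n})
    ⟨0, ∅, Set.pairwise_empty _, Set.ncard_empty V⟩ (bddAbove_ncard_isIndepSet G)

theorem ncard_le_of_ncard_eq_indepNum {M : Set V} (hM : M.ncard = indepNum G) :
    ∀ S, G.IsIndepSet S → S.ncard ≤ M.ncard :=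
  fun _ hS => hM ▸ ncard_le_indepNum_of_isIndepSet hS

theorem exists_adj_of_maximum {M : Set V} {r : V} (hM : G.IsIndepSet M)
    (hmax : ∀ S, G.IsIndepSet S → S.ncard ≤ M.ncard) (hrM : r ∉ M) : ∃ m ∈ M, G.Adj r m := by
  by_contra! hno
  have := hmax _ (isIndepSet_insert hM hno)
  rw [Set.ncard_insert_of_notMem hrM] at this
  omega

theorem ncard_sdiff_closedNbhd_union_add (M T : Set V) :
    (M \ closedNbhd G T ∪ T).ncard + (closedNbhd G T ∩ M).ncard = M.ncard + T.ncard := by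
  have hdisj : Disjoint (M \ closedNbhd G T) T :=
    Set.disjoint_left.2 fun _ hv hvT => hv.2 (subset_closedNbhd T hvT)
  rw [Set.ncard_union_eq hdisj, Set.inter_comm, ← Set.ncard_inter_add_ncard_sdiff_eq_ncard M
    (closedNbhd G T)]
  omega

theorem ncard_le_ncard_closedNbhd_inter {M T : Set V} (hM : G.IsIndepSet M)
    (hmax : ∀ S, G.IsIndepSet S → S.ncard ≤ M.ncard) (hT : G.IsIndepSet T) :
    T.ncard ≤ (closedNbhd G T ∩ M).ncard := by
  have := hmax _ (isIndepSet_sdiff_closedNbhd_union hM hT)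
  have := ncard_sdiff_closedNbhd_union_add (G := G) M T
  omega

theorem isIndepHall_of_maximum {M : Set V} (hM : G.IsIndepSet M)
    (hmax : ∀ S, G.IsIndepSet S → S.ncard ≤ M.ncard) : IsIndepHall G M :=
  fun _ hT => ncard_le_ncard_closedNbhd_inter hM hmax hT

theorem exists_injOn_of_hall {D Q : Set V}
    (hall : ∀ T ⊆ Q, T.ncard ≤ (closedNbhd G T ∩ D).ncard) :
    ∃ g : V → V, Set.InjOn g Q ∧ ∀ q ∈ Q, g q ∈ closedNbhd G {q} ∩ D := by
  have := Fintype.ofFinite V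
  obtain ⟨g, hg_inj, hg⟩ := (Fintype.all_card_le_filter_rel_iff_exists_injective
    fun (q : Q) v => v ∈ closedNbhd G {(q : V)} ∩ D).1 fun A => by
      have hA : ((Finset.univ.filter fun v => ∃ a ∈ A, v ∈ closedNbhd G {(a : V)} ∩ D : Finset V) :
          Set V) = closedNbhd G (Subtype.val '' (A : Set Q)) ∩ D := by
        ext v
        simp [closedNbhd, ← and_assoc, exists_and_right]
      have := hall (Subtype.val '' (A : Set Q)) (by rintro _ ⟨q, -, rfl⟩; exact q.2)
      rwa [Set.ncard_image_of_injective _ Subtype.val_injective, Set.ncard_coe_finset, ← hA,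
        Set.ncard_coe_finset] at this
  refine ⟨fun v => if h : v ∈ Q then g ⟨v, h⟩ else v, fun p hp q hq hpq => ?_, fun q hq => ?_⟩
  · simp only [dif_pos hp, dif_pos hq] at hpq
    exact congrArg Subtype.val (hg_inj hpq)
  · simpa only [dif_pos hq] using hg ⟨q, hq⟩

theorem exists_bijOn_of_hall {D Q : Set V} (hcard : Q.ncard = D.ncard)
    (hall : ∀ T ⊆ Q, T.ncard ≤ (closedNbhd G T ∩ D).ncard) :
    ∃ f : V → V, Set.BijOn f D Q ∧ ∀ v ∈ D, f v = v ∨ G.Adj v (f v) := by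
  rcases isEmpty_or_nonempty V with hV | hV
  · exact ⟨id, by simp [Set.eq_empty_of_isEmpty], fun v => isEmptyElim v⟩
  obtain ⟨g, hinj, hg⟩ := exists_injOn_of_hall hall
  have hmaps : Set.MapsTo g Q D := fun q hq => (hg q hq).2
  have himage : g '' Q = D := Set.eq_of_subset_of_ncard_le hmaps.image_subset
    (by rw [hinj.ncard_image, hcard])
  have hbij : Set.BijOn g Q D := himage ▸ hinj.bijOn_image
  have hinv := hbij.invOn_invFunOn
  refine ⟨Function.invFunOn g Q, hbij.symm hinv.symm, fun v hv => ?_⟩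
  have hq := (hbij.symm hinv.symm).mapsTo hv
  have hv_nbhd := (hg _ hq).1
  rw [hinv.2 hv, mem_closedNbhd_singleton] at hv_nbhd
  exact hv_nbhd.imp Eq.symm G.adj_symm

variable (G) in
/-- Hall's condition for moving the guards from `D` onto `M - m + r` can only fail at a blocking
set avoiding `m`. -/
def IsBlocking (M D : Set V) (r : V) (S : Set V) : Prop :=
  S ⊆ M ∧ (closedNbhd G S ∩ D).ncard = S.ncard ∧ G.neighborSet r ∩ D ⊆ closedNbhd G S

theorem IsBlocking.inter {M D S₁ S₂ : Set V} {r : V} (hM : G.IsIndepSet M)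
    (hD : IsIndepHall G D) (h₁ : IsBlocking G M D r S₁) (h₂ : IsBlocking G M D r S₂) :
    IsBlocking G M D r (S₁ ∩ S₂) := by
  obtain ⟨hS₁M, hS₁, hr₁⟩ := h₁
  obtain ⟨hS₂M, hS₂, hr₂⟩ := h₂
  set N₁ := closedNbhd G S₁ ∩ D
  set N₂ := closedNbhd G S₂ ∩ D
  have hunion : closedNbhd G (S₁ ∪ S₂) ∩ D = N₁ ∪ N₂ := by
    rw [closedNbhd_union, Set.union_inter_distrib_right]
  have hsub : closedNbhd G (S₁ ∩ S₂) ∩ D ⊆ N₁ ∩ N₂ := fun v hv =>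
    ⟨⟨closedNbhd_mono Set.inter_subset_left hv.1, hv.2⟩,
      ⟨closedNbhd_mono Set.inter_subset_right hv.1, hv.2⟩⟩
  have h_union := hD _ (hM.mono (Set.union_subset hS₁M hS₂M))
  have h_inter := hD (S₁ ∩ S₂) (hM.mono (Set.inter_subset_left.trans hS₁M))
  have hN := Set.ncard_union_add_ncard_inter N₁ N₂
  have hS := Set.ncard_union_add_ncard_inter S₁ S₂
  have hle := Set.ncard_le_ncard hsub
  rw [hunion] at h_union
  have heq : closedNbhd G (S₁ ∩ S₂) ∩ D = N₁ ∩ N₂ :=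
    Set.eq_of_subset_of_ncard_le hsub (by omega)
  refine ⟨Set.inter_subset_left.trans hS₁M, by omega, fun v hv => ?_⟩
  have hv' : v ∈ N₁ ∩ N₂ := ⟨⟨hr₁ hv, hv.2⟩, ⟨hr₂ hv, hv.2⟩⟩
  rw [← heq] at hv'
  exact hv'.1

theorem IsBlocking.exists_adj {M D S : Set V} {r : V} (hS : IsBlocking G M D r S)
    (hM : G.IsIndepSet M) (hD : IsIndepHall G D) (hrM : r ∉ M) (hrD : r ∉ D) :
    ∃ u ∈ S, G.Adj r u := by
  by_contra! hno
  obtain ⟨hSM, hS, hr⟩ := hS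
  have hsub : closedNbhd G (insert r S) ∩ D ⊆ closedNbhd G S ∩ D := by
    rintro v ⟨hv, hvD⟩
    rw [Set.insert_eq, closedNbhd_union] at hv
    rcases hv with hv | hv
    · rcases mem_closedNbhd_singleton.1 hv with rfl | hadj
      · exact absurd hvD hrD
      · exact ⟨hr ⟨hadj, hvD⟩, hvD⟩
    · exact ⟨hv, hvD⟩
  have := hD _ (isIndepSet_insert (hM.mono hSM) hno)
  rw [Set.ncard_insert_of_notMem fun h => hrM (hSM h)] at this
  have := Set.ncard_le_ncard hsub
  omega

theorem exists_mem_forall_isBlocking {M D : Set V} {r : V} (hM : G.IsIndepSet M)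
    (hD : IsIndepHall G D) (hrM : r ∉ M) (hrD : r ∉ D) (hr : ∃ m ∈ M, G.Adj r m) :
    ∃ m ∈ M, G.Adj r m ∧ ∀ S, IsBlocking G M D r S → m ∈ S := by
  by_cases hB : ∃ S, IsBlocking G M D r S
  · obtain ⟨S₀, hS₀, hmin⟩ :=
      Set.exists_min_image {S | IsBlocking G M D r S} Set.ncard (Set.toFinite _) hB
    obtain ⟨m, hm, hrm⟩ := hS₀.exists_adj hM hD hrM hrD
    refine ⟨m, hS₀.1 hm, hrm, fun S hS => ?_⟩
    have hS₀S : S₀ ∩ S = S₀ :=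
      Set.eq_of_subset_of_ncard_le Set.inter_subset_left (hmin _ (hS₀.inter hM hD hS))
    exact (hS₀S.symm ▸ hm : m ∈ S₀ ∩ S).2
  · push Not at hB
    obtain ⟨m, hm, hrm⟩ := hr
    exact ⟨m, hm, hrm, fun S hS => (hB S hS).elim⟩

theorem ncard_le_ncard_closedNbhd_inter_of_subset_insert {M D T : Set V} {r m : V}
    (hM : G.IsIndepSet M) (hD : IsIndepHall G D) (hm : ∀ S, IsBlocking G M D r S → m ∈ S)
    (hT : T ⊆ insert r (M \ {m})) : T.ncard ≤ (closedNbhd G T ∩ D).ncard := by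
  by_cases hrT : r ∈ T
  swap
  · exact hD T (hM.mono fun t ht => ((hT ht).resolve_left fun h => hrT (h ▸ ht)).1)
  set T' := T \ {r}
  have hcard : T'.ncard + 1 = T.ncard := Set.ncard_sdiff_singleton_add_one hrT
  have hT'M : T' ⊆ M \ {m} := fun t ht => (hT ht.1).resolve_left ht.2
  have hT'D := hD T' (hM.mono (hT'M.trans Set.sdiff_subset))
  have hsub : closedNbhd G T' ∩ D ⊆ closedNbhd G T ∩ D :=
    Set.inter_subset_inter_left D (closedNbhd_mono Set.sdiff_subset)
  by_contra! hlt
  have heq : closedNbhd G T' ∩ D = closedNbhd G T ∩ D :=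
    Set.eq_of_subset_of_ncard_le hsub (by omega)
  have hblock : IsBlocking G M D r T' := by
    refine ⟨hT'M.trans Set.sdiff_subset, ?_, fun v hv => ?_⟩
    · rw [heq] at hT'D ⊢
      omega
    have hv' : v ∈ closedNbhd G T ∩ D := ⟨⟨r, hrT, Or.inr hv.1⟩, hv.2⟩
    rw [← heq] at hv'
    exact hv'.1
  exact (hT'M (hm T' hblock)).2 rfl

theorem ncard_lt_ncard_closedNbhd_inter {M T : Set V} {r m : V} (hM : G.IsIndepSet M)
    (hmax : ∀ S, G.IsIndepSet S → S.ncard ≤ M.ncard)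
    (hmin : ∀ W, G.IsIndepSet W → W.ncard = M.ncard →
      (M ∩ G.neighborSet r).ncard ≤ (W ∩ G.neighborSet r).ncard)
    (hmM : m ∈ M) (hrm : G.Adj r m) (hT : G.IsIndepSet T) (hrT : r ∉ closedNbhd G T)
    (hmT : m ∈ closedNbhd G T) : T.ncard < (closedNbhd G T ∩ M).ncard := by
  by_contra! hle
  -- otherwise `M \ N[T] ∪ T` is a maximum independent set with fewer neighbours of `r` than `M`
  have hW := ncard_sdiff_closedNbhd_union_add (G := G) M T
  have hbase := ncard_le_ncard_closedNbhd_inter hM hmax hT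
  have hsub : (M \ closedNbhd G T ∪ T) ∩ G.neighborSet r ⊆ (M ∩ G.neighborSet r) \ {m} := by
    rintro u ⟨hu | hu, hur⟩
    · exact ⟨⟨hu.1, hur⟩, fun h => hu.2 (h ▸ hmT)⟩
    · exact absurd ⟨u, hu, Or.inr hur.symm⟩ hrT
  have := hmin _ (isIndepSet_sdiff_closedNbhd_union hM hT) (by omega)
  have := Set.ncard_le_ncard hsub
  have := Set.ncard_sdiff_singleton_lt_of_mem (s := M ∩ G.neighborSet r) ⟨hmM, hrm⟩
  omega

theorem isIndepHall_insert_sdiff {M : Set V} {r m : V} (hM : G.IsIndepSet M)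
    (hmax : ∀ S, G.IsIndepSet S → S.ncard ≤ M.ncard)
    (hmin : ∀ W, G.IsIndepSet W → W.ncard = M.ncard →
      (M ∩ G.neighborSet r).ncard ≤ (W ∩ G.neighborSet r).ncard)
    (hmM : m ∈ M) (hrm : G.Adj r m) (hrM : r ∉ M) : IsIndepHall G (insert r (M \ {m})) := by
  intro T hT
  have hbase := ncard_le_ncard_closedNbhd_inter hM hmax hT
  have hsub : (closedNbhd G T ∩ M) \ {m} ⊆ closedNbhd G T ∩ insert r (M \ {m}) :=
    fun v hv => ⟨hv.1.1, Or.inr ⟨hv.1.2, hv.2⟩⟩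
  by_cases hmT : m ∈ closedNbhd G T
  swap
  · rw [Set.sdiff_singleton_eq_self fun h => hmT h.1] at hsub
    exact hbase.trans (Set.ncard_le_ncard hsub)
  have hdrop := Set.ncard_sdiff_singleton_add_one (Set.mem_inter hmT hmM)
  by_cases hrT : r ∈ closedNbhd G T
  · have := Set.ncard_le_ncard (Set.insert_subset (Set.mem_inter hrT (Set.mem_insert r _)) hsub)
    rw [Set.ncard_insert_of_notMem fun h => hrM h.1.2] at this
    omega
  · have := ncard_lt_ncard_closedNbhd_inter hM hmax hmin hmM hrm hT hrT hmT
    have := Set.ncard_le_ncard hsub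
    omega

theorem exists_guard_move {D : Set V} (hD : IsIndepHall G D) (hDcard : D.ncard = indepNum G)
    {r : V} (hrD : r ∉ D) :
    ∃ D', (IsIndepHall G D' ∧ D'.ncard = indepNum G) ∧ r ∈ D' ∧
      ∃ f : V → V, Set.BijOn f D D' ∧ ∀ v ∈ D, f v = v ∨ G.Adj v (f v) := by
  by_cases hr : ∃ M, (G.IsIndepSet M ∧ M.ncard = indepNum G) ∧ r ∈ M
  · obtain ⟨M, ⟨hM, hMcard⟩, hrM⟩ := hr
    obtain ⟨f, hf⟩ := exists_bijOn_of_hall (hMcard.trans hDcard.symm)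
      fun T hT => hD T (hM.mono hT)
    exact ⟨M, ⟨isIndepHall_of_maximum hM (ncard_le_of_ncard_eq_indepNum hMcard), hMcard⟩, hrM,
      f, hf⟩
  push Not at hr
  obtain ⟨M, ⟨hM, hMcard⟩, hmin⟩ := Set.exists_min_image
    {M | G.IsIndepSet M ∧ M.ncard = indepNum G} (fun M => (M ∩ G.neighborSet r).ncard)
    (Set.toFinite _) (exists_isIndepSet_ncard_eq_indepNum G)
  have hmax := ncard_le_of_ncard_eq_indepNum hMcard
  have hrM := hr M ⟨hM, hMcard⟩
  obtain ⟨m, hmM, hrm, hm⟩ :=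
    exists_mem_forall_isBlocking hM hD hrM hrD (exists_adj_of_maximum hM hmax hrM)
  have hQcard : (insert r (M \ {m})).ncard = indepNum G := by
    rw [Set.ncard_insert_of_notMem fun h => hrM h.1, Set.ncard_sdiff_singleton_add_one hmM,
      hMcard]
  obtain ⟨f, hf⟩ := exists_bijOn_of_hall (hQcard.trans hDcard.symm)
    fun T hT => ncard_le_ncard_closedNbhd_inter_of_subset_insert hM hD hm hT
  have hQ := isIndepHall_insert_sdiff hM hmax
    (fun W hW hWcard => hmin W ⟨hW, hWcard.trans hMcard⟩) hmM hrm hrM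
  exact ⟨_, ⟨hQ, hQcard⟩, Set.mem_insert r _, f, hf⟩

end Finite

end ED

open ED in
/-- For any graph `G`, `γ_m^∞(G) ≤ β(G)`. -/
theorem stmt_16 {V : Type} [Fintype V] (G : SimpleGraph V) :
    mEternalDomNum G ≤ indepNum G := by
  obtain ⟨M, hM, hMcard⟩ := exists_isIndepSet_ncard_eq_indepNum G
  refine Nat.sInf_le ⟨{D | IsIndepHall G D ∧ D.ncard = indepNum G}, ⟨M, ?_, hMcard⟩,
    fun D hD => ⟨hD.1.isDomSet, hD.2⟩, fun D hD r hr => exists_guard_move hD.1 hD.2 hr⟩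
  exact isIndepHall_of_maximum hM (ncard_le_of_ncard_eq_indepNum hMcard)
end

section
/- Every tree with at least two vertices that is not a star has at least two exposed stems. -/
open scoped Classical

/-!
Take a longest path `u = v₀, v₁, …, v_L = v` in the tree. Its end `u` is a leaf whose only
neighbour is `v₁`. A neighbour `w ∉ {u, v₂}` of `v₁` lies off the path, so `w, v₁, …, v_L` is
again a longest path and `w` is a leaf as well: `v₁` is an exposed stem, and so is `v_{L-1}`.
These two stems are distinct as soon as `L ≥ 3`, and if `L ≤ 2` the tree is a star centred
at `v₁`.
-/

namespace SimpleGraph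

open ED

variable {V : Type} {G : SimpleGraph V}

theorem IsAcyclic.not_adj_of_adj_of_adj (hG : G.IsAcyclic) {c x y : V} (hx : G.Adj c x)
    (hy : G.Adj c y) : ¬G.Adj x y := by
  intro hxy
  have hpath : (Walk.cons hxy (Walk.cons hy.symm Walk.nil)).IsPath := by
    simp [hxy.ne, hx.ne', hy.ne']
  exact hy.ne (hG.eq_snd_of_adj_start hpath hx.symm (by simp))

def Walk.IsLongestPath {u v : V} (p : G.Walk u v) : Prop :=
  p.IsPath ∧ ∀ ⦃x y : V⦄ (q : G.Walk x y), q.IsPath → q.length ≤ p.length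

theorem exists_isLongestPath [Finite V] [Nonempty V] (G : SimpleGraph V) :
    ∃ (u v : V) (p : G.Walk u v), p.IsLongestPath := by
  have := Fintype.ofFinite V
  let lengths : Set ℕ := {n | ∃ (x y : V) (q : G.Walk x y), q.IsPath ∧ q.length = n}
  have hne : lengths.Nonempty := ⟨0, Classical.arbitrary V, _, .nil, .nil, rfl⟩
  have hbdd : BddAbove lengths := ⟨Fintype.card V, by
    rintro _ ⟨x, y, q, hq, rfl⟩
    exact hq.length_lt.le⟩
  obtain ⟨u, v, p, hp, hlen⟩ := Nat.sSup_mem hne hbdd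
  exact ⟨u, v, p, hp, fun x y q hq => hlen ▸ le_csSup hbdd ⟨x, y, q, hq, rfl⟩⟩

namespace Walk

theorem IsPath.snd_ne_penultimate {u v : V} {p : G.Walk u v} (hp : p.IsPath)
    (hlen : 3 ≤ p.length) : p.snd ≠ p.penultimate := fun h => by
  have := hp.getVert_injOn (show 1 ≤ p.length by omega) (show p.length - 1 ≤ p.length by omega) h
  omega

theorem IsLongestPath.of_isPath {u v x y : V} {p : G.Walk u v} {q : G.Walk x y}
    (hp : p.IsLongestPath) (hq : q.IsPath) (hlen : p.length ≤ q.length) : q.IsLongestPath :=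
  ⟨hq, fun _ _ r hr => (hp.2 r hr).trans hlen⟩

theorem IsLongestPath.reverse {u v : V} {p : G.Walk u v} (hp : p.IsLongestPath) :
    p.reverse.IsLongestPath :=
  hp.of_isPath hp.1.reverse (length_reverse p).ge

theorem IsLongestPath.mem_support_of_adj_start {u v w : V} {p : G.Walk u v}
    (hp : p.IsLongestPath) (h : G.Adj w u) : w ∈ p.support := by
  by_contra hw
  have := hp.2 (cons h p) ((cons_isPath_iff h p).2 ⟨hp.1, hw⟩)
  simp at this

theorem IsLongestPath.not_nil [Nontrivial V] (hG : G.Connected) {u v : V} {p : G.Walk u v}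
    (hp : p.IsLongestPath) : ¬p.Nil := by
  obtain ⟨x, y, hxy⟩ := exists_pair_ne V
  obtain ⟨q, hq⟩ := hG.exists_isPath x y
  have hq_nil : ¬q.Nil := fun h => hxy h.eq
  exact not_nil_iff_lt_length.2 ((not_nil_iff_lt_length.1 hq_nil).trans_le (hp.2 q hq))

theorem IsLongestPath.neighborSet_start (hG : G.IsAcyclic) {u v : V} {p : G.Walk u v}
    (hp : p.IsLongestPath) (hnil : ¬p.Nil) : G.neighborSet u = {p.snd} := by
  ext w
  refine ⟨fun h => hG.eq_snd_of_adj_start hp.1 h (hp.mem_support_of_adj_start h.symm), ?_⟩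
  rintro rfl
  exact p.adj_snd hnil

theorem IsLongestPath.isLeaf_start (hG : G.IsAcyclic) {u v : V} {p : G.Walk u v}
    (hp : p.IsLongestPath) (hnil : ¬p.Nil) : IsLeaf G u := by
  rw [IsLeaf, hp.neighborSet_start hG hnil, Set.ncard_singleton]

theorem IsLongestPath.isExposedStem_snd [Finite V] (hG : G.IsAcyclic) {u v : V}
    {p : G.Walk u v} (hp : p.IsLongestPath) (hlen : 2 ≤ p.length) : IsExposedStem G p.snd := by
  have hnil : ¬p.Nil := not_nil_iff_lt_length.2 (by omega)
  have htail_nil : ¬p.tail.Nil := not_nil_iff_lt_length.2 (by rw [length_tail]; omega)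
  have hcons : (cons (p.adj_snd hnil) p.tail).IsPath := by rw [p.cons_tail_eq hnil]; exact hp.1
  have hu : u ∉ p.tail.support := ((cons_isPath_iff _ _).1 hcons).2
  have hinternal : {w | G.Adj p.snd w ∧ ¬IsLeaf G w} ⊆ {p.tail.snd} := by
    rintro w ⟨hsw, hw⟩
    by_cases hwt : w ∈ p.tail.support
    · exact hG.eq_snd_of_adj_start hp.1.tail hsw hwt
    · -- otherwise `w` starts a longest path through `p.snd`, so it would be a leaf
      have hq := (cons_isPath_iff hsw.symm p.tail).2 ⟨hp.1.tail, hwt⟩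
      have hq_longest := hp.of_isPath hq (by rw [length_cons, length_tail]; omega)
      exact absurd (hq_longest.isLeaf_start hG not_nil_cons) hw
  refine ⟨⟨?_, u, (p.adj_snd hnil).symm, hp.isLeaf_start hG hnil⟩, ?_⟩
  · exact (Set.one_lt_ncard (Set.toFinite _)).2 ⟨u, (p.adj_snd hnil).symm, p.tail.snd,
      p.tail.adj_snd htail_nil, (ne_of_mem_of_not_mem (p.tail.getVert_mem_support 1) hu).symm⟩
  · exact (Set.ncard_le_ncard hinternal).trans (Set.ncard_singleton _).le

theorem IsLongestPath.isStarGraph (hT : G.IsTree) {u v : V} {p : G.Walk u v}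
    (hp : p.IsLongestPath) (hnil : ¬p.Nil) (hlen : p.length ≤ 2) : IsStarGraph G := by
  have hleaf := hp.neighborSet_start hT.isAcyclic hnil
  -- every path leaving the leaf `u` passes through `p.snd` and has length at most 2
  have hcenter : ∀ w, w ≠ p.snd → G.Adj p.snd w := by
    intro w hw
    by_cases hwu : w = u
    · exact hwu ▸ (p.adj_snd hnil).symm
    obtain ⟨r, hr⟩ := hT.connected.exists_isPath u w
    have hrnil : ¬r.Nil := fun h => hwu h.eq.symm
    have hrsnd : r.snd = p.snd := by
      rw [← Set.mem_singleton_iff, ← hleaf]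
      exact r.adj_snd hrnil
    have htail_nil : ¬r.tail.Nil := fun h => hw (hrsnd ▸ h.eq).symm
    have htail_len : r.tail.length = 1 := by
      have hpos := not_nil_iff_lt_length.1 htail_nil
      have hle := hp.2 r hr
      rw [length_tail] at hpos ⊢
      omega
    exact hrsnd ▸ adj_of_length_eq_one htail_len
  refine ⟨p.snd, hcenter, fun x y hxy => ?_⟩
  by_contra! hne
  exact hT.isAcyclic.not_adj_of_adj_of_adj (hcenter x hne.1) (hcenter y hne.2) hxy

end Walk

end SimpleGraph

open ED in
/-- Every tree with at least two vertices that is not a star has at least two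
exposed stems. -/
theorem stmt_17 {V : Type} [Fintype V] (T : SimpleGraph V) (hT : T.IsTree)
    (hn : 2 ≤ Fintype.card V) (hstar : ¬ IsStarGraph T) :
    2 ≤ {s : V | IsExposedStem T s}.ncard := by
  have : Nontrivial V := Fintype.one_lt_card_iff_nontrivial.1 hn
  obtain ⟨u, v, p, hp⟩ := T.exists_isLongestPath
  have hnil : ¬p.Nil := hp.not_nil hT.connected
  have hlen : 3 ≤ p.length := by
    by_contra! h
    exact hstar (hp.isStarGraph hT hnil (by omega))
  have hsnd := hp.isExposedStem_snd hT.isAcyclic (by omega)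
  have hpen := hp.reverse.isExposedStem_snd hT.isAcyclic (by rw [p.length_reverse]; omega)
  rw [p.snd_reverse] at hpen
  exact (Set.one_lt_ncard (Set.toFinite _)).2 ⟨_, hsnd, _, hpen, hp.1.snd_ne_penultimate hlen⟩
end
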